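/- arXiv:1512.00797 — 4 statements merged into one kernel-verified Lean document; each statement's English description precedes it below -/
import Mathlib

section
/- Let R be a field and R₁ a (possibly nonunital) prime R-algebra. Then there exist a unital prime R-algebra R₂ and an injective R-algebra homomorphism R₁ → R₂ whose image is a two-sided ideal of R₂; moreover, R₂ is left primitive if and only if R₁ is left primitive. -/
open scoped ENat

/-! ## `k`-graphs -/

/-- The `i`-th standard generator of `ℕᵏ`. -/
def unitVec {k : ℕ} (i : Fin k) : Fin k → ℕ := fun j => if j = i then 1 else 0

/-- A higher-rank graph (`k`-graph): a countable category together with a degree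
functor `d : Λ → ℕᵏ` satisfying the unique factorization property.  Morphisms are
composed in the "path" order: `comp f g` is defined when `src f = rng g`. -/
structure KGraph (k : ℕ) : Type 1 where
  Obj : Type
  Mor : Type
  mor_countable : Countable Mor
  src : Mor → Obj
  rng : Mor → Obj
  comp : ∀ f g : Mor, src f = rng g → Mor
  id : Obj → Mor
  deg : Mor → Fin k → ℕ
  src_id : ∀ v, src (id v) = v
  rng_id : ∀ v, rng (id v) = v
  deg_id : ∀ v, deg (id v) = 0
  src_comp : ∀ f g h, src (comp f g h) = src g
  rng_comp : ∀ f g h, rng (comp f g h) = rng f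
  deg_comp : ∀ f g h, deg (comp f g h) = deg f + deg g
  id_comp : ∀ f, comp (id (rng f)) f (src_id (rng f)) = f
  comp_id : ∀ f, comp f (id (src f)) ((rng_id (src f)).symm) = f
  comp_assoc : ∀ f g h (hfg : src f = rng g) (hgh : src g = rng h),
    comp (comp f g hfg) h ((src_comp f g hfg).trans hgh) =
      comp f (comp g h hgh) (hfg.trans (rng_comp g h hgh).symm)
  factorization : ∀ (f : Mor) (m n : Fin k → ℕ), deg f = m + n →
    ∃! p : Mor × Mor, ∃ h : src p.1 = rng p.2,
      deg p.1 = m ∧ deg p.2 = n ∧ comp p.1 p.2 h = f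

namespace KGraph

variable {k : ℕ}

/-- `Λ` is row-finite if every `vΛⁿ` is finite. -/
def RowFinite (Λ : KGraph k) : Prop :=
  ∀ (v : Λ.Obj) (n : Fin k → ℕ), {f : Λ.Mor | Λ.rng f = v ∧ Λ.deg f = n}.Finite

/-- `Λ` has no sources if every `vΛⁿ` is nonempty. -/
def NoSources (Λ : KGraph k) : Prop :=
  ∀ (v : Λ.Obj) (n : Fin k → ℕ), ∃ f : Λ.Mor, Λ.rng f = v ∧ Λ.deg f = n

/-- `Λ` is locally convex. -/
def LocallyConvex (Λ : KGraph k) : Prop :=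
  ∀ (v : Λ.Obj) (i j : Fin k), i ≠ j →
    ∀ f g : Λ.Mor, Λ.rng f = v → Λ.deg f = unitVec i → Λ.rng g = v → Λ.deg g = unitVec j →
      (∃ f' : Λ.Mor, Λ.rng f' = Λ.src f ∧ Λ.deg f' = unitVec j) ∧
      (∃ g' : Λ.Mor, Λ.rng g' = Λ.src g ∧ Λ.deg g' = unitVec i)

/-- The set `Λ^{≤ n}`. -/
def LeSet (Λ : KGraph k) (n : Fin k → ℕ) : Set Λ.Mor :=
  {f | Λ.deg f ≤ n ∧ ∀ i : Fin k, Λ.deg f + unitVec i ≤ n →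
    ¬∃ g : Λ.Mor, Λ.rng g = Λ.src f ∧ Λ.deg g = unitVec i}

/-- Condition (MT3): any two vertices can be connected to a common vertex. -/
def MT3 (Λ : KGraph k) : Prop :=
  ∀ v₁ v₂ : Λ.Obj, ∃ w : Λ.Obj,
    (∃ f : Λ.Mor, Λ.rng f = v₁ ∧ Λ.src f = w) ∧ (∃ f : Λ.Mor, Λ.rng f = v₂ ∧ Λ.src f = w)

/-- A hereditary set of vertices. -/
def Hereditary (Λ : KGraph k) (H : Set Λ.Obj) : Prop :=
  ∀ v w : Λ.Obj, v ∈ H → (∃ f : Λ.Mor, Λ.rng f = v ∧ Λ.src f = w) → w ∈ H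

/-- A saturated set of vertices. -/
def Saturated (Λ : KGraph k) (H : Set Λ.Obj) : Prop :=
  ∀ (v : Λ.Obj) (i : Fin k),
    (∀ f ∈ Λ.LeSet (unitVec i), Λ.rng f = v → Λ.src f ∈ H) → v ∈ H

/-- A maximal tail: a nonempty vertex set satisfying (MT1), (MT2) and (MT3). -/
def MaximalTail (Λ : KGraph k) (M : Set Λ.Obj) : Prop :=
  M.Nonempty ∧
  (∀ v w : Λ.Obj, w ∈ M → (∃ f : Λ.Mor, Λ.rng f = v ∧ Λ.src f = w) → v ∈ M) ∧
  (∀ v ∈ M, ∀ i : Fin k, ∃ f ∈ Λ.LeSet (unitVec i), Λ.rng f = v ∧ Λ.src f ∈ M) ∧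
  (∀ v₁ ∈ M, ∀ v₂ ∈ M, ∃ w ∈ M,
    (∃ f : Λ.Mor, Λ.rng f = v₁ ∧ Λ.src f = w) ∧ (∃ f : Λ.Mor, Λ.rng f = v₂ ∧ Λ.src f = w))

/-- The quotient graph `Λ ∖ H` for a hereditary `H`: vertices `Λ⁰ ∖ H` and
morphisms those of `Λ` with source outside `H`. -/
def minus (Λ : KGraph k) (H : Set Λ.Obj) (hH : Λ.Hereditary H) : KGraph k where
  Obj := {v : Λ.Obj // v ∉ H}
  Mor := {f : Λ.Mor // Λ.src f ∉ H}
  mor_countable := by haveI := Λ.mor_countable; exact inferInstance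
  src f := ⟨Λ.src f.1, f.2⟩
  rng f := ⟨Λ.rng f.1, fun hm => f.2 (hH _ _ hm ⟨f.1, rfl, rfl⟩)⟩
  comp f g h := ⟨Λ.comp f.1 g.1 (congrArg Subtype.val h), by
    rw [Λ.src_comp]; exact g.2⟩
  id v := ⟨Λ.id v.1, by rw [Λ.src_id]; exact v.2⟩
  deg f := Λ.deg f.1
  src_id v := Subtype.ext (Λ.src_id v.1)
  rng_id v := Subtype.ext (Λ.rng_id v.1)
  deg_id v := Λ.deg_id v.1
  src_comp f g h := Subtype.ext (Λ.src_comp f.1 g.1 _)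
  rng_comp f g h := Subtype.ext (Λ.rng_comp f.1 g.1 _)
  deg_comp f g h := Λ.deg_comp f.1 g.1 _
  id_comp f := Subtype.ext (Λ.id_comp f.1)
  comp_id f := Subtype.ext (Λ.comp_id f.1)
  comp_assoc f g h hfg hgh := Subtype.ext (Λ.comp_assoc f.1 g.1 h.1 _ _)
  factorization := by
    rintro ⟨f, hf⟩ m n hdeg
    obtain ⟨⟨p₁, p₂⟩, ⟨h, hm, hn, hcomp⟩, huniq⟩ := Λ.factorization f m n hdeg
    have hp₂ : Λ.src p₂ ∉ H := by
      have hs : Λ.src (Λ.comp p₁ p₂ h) = Λ.src p₂ := Λ.src_comp _ _ _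
      rw [hcomp] at hs
      rw [← hs]; exact hf
    have hp₁ : Λ.src p₁ ∉ H := fun hmem => hp₂ (hH _ _ (h ▸ hmem) ⟨p₂, rfl, rfl⟩)
    refine ⟨(⟨p₁, hp₁⟩, ⟨p₂, hp₂⟩), ⟨Subtype.ext h, hm, hn, Subtype.ext hcomp⟩, ?_⟩
    rintro ⟨⟨q₁, hq₁⟩, ⟨q₂, hq₂⟩⟩ ⟨h', hm', hn', hcomp'⟩
    have hq := huniq (q₁, q₂)
      ⟨congrArg Subtype.val h', hm', hn', congrArg Subtype.val hcomp'⟩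
    rw [Prod.ext_iff]
    exact ⟨Subtype.ext (congrArg Prod.fst hq), Subtype.ext (congrArg Prod.snd hq)⟩

/-! ## Boundary paths -/

/-- `minDeg m d = m ∧ d`, the pointwise minimum of `m ∈ ℕᵏ` and a degree `d ∈ (ℕ∪{∞})ᵏ`,
viewed in `ℕᵏ`. -/
noncomputable def minDeg {k : ℕ} (m : Fin k → ℕ) (d : Fin k → ℕ∞) : Fin k → ℕ :=
  fun i => (min (m i : ℕ∞) (d i)).toNat

lemma minDeg_ne_top {k : ℕ} (m : Fin k → ℕ) (d : Fin k → ℕ∞) (i : Fin k) :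
    min (m i : ℕ∞) (d i) ≠ ⊤ := by
  intro h
  exact ENat.coe_ne_top (m i) (top_le_iff.mp (h ▸ min_le_left (m i : ℕ∞) (d i)))

lemma minDeg_le_deg {k : ℕ} (m : Fin k → ℕ) (d : Fin k → ℕ∞) (i : Fin k) :
    ((minDeg m d i : ℕ∞)) ≤ d i := by
  have h := ENat.coe_toNat (minDeg_ne_top m d i)
  calc ((minDeg m d i : ℕ∞)) = min (m i : ℕ∞) (d i) := h
    _ ≤ d i := min_le_right _ _

lemma minDeg_mono {k : ℕ} {m n : Fin k → ℕ} (h : m ≤ n) (d : Fin k → ℕ∞) :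
    minDeg m d ≤ minDeg n d := by
  intro i
  exact ENat.toNat_le_toNat (min_le_min (by exact_mod_cast h i) le_rfl) (minDeg_ne_top n d i)

/-- A boundary path in `Λ`: a degree-preserving functor `x : Ω_{k,m} → Λ`
(for `m = bdeg ∈ (ℕ ∪ {∞})ᵏ`) such that `p ≤ m` and `p i = m i` imply
`x(p)Λ^{eᵢ} = ∅`. -/
structure BPath {k : ℕ} (Λ : KGraph k) : Type where
  bdeg : Fin k → ℕ∞
  mor : ∀ p q : Fin k → ℕ, p ≤ q → (∀ i, ((q i : ℕ∞)) ≤ bdeg i) → Λ.Mor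
  deg_mor : ∀ p q hpq hq, Λ.deg (mor p q hpq hq) = q - p
  mor_self : ∀ p hp, mor p p le_rfl hp = Λ.id (Λ.rng (mor p p le_rfl hp))
  src_mor : ∀ p q hpq hq, Λ.src (mor p q hpq hq) = Λ.rng (mor q q le_rfl hq)
  rng_mor : ∀ p q hpq (hq : ∀ i, ((q i : ℕ∞)) ≤ bdeg i) (hp : ∀ i, ((p i : ℕ∞)) ≤ bdeg i),
    Λ.rng (mor p q hpq hq) = Λ.rng (mor p p le_rfl hp)
  comp_mor : ∀ p q r (hpq : p ≤ q) (hqr : q ≤ r) (hr : ∀ i, ((r i : ℕ∞)) ≤ bdeg i)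
      (hq : ∀ i, ((q i : ℕ∞)) ≤ bdeg i),
    Λ.comp (mor p q hpq hq) (mor q r hqr hr)
        ((src_mor p q hpq hq).trans (rng_mor q r hqr hr hq).symm) =
      mor p r (hpq.trans hqr) hr
  boundary : ∀ (p : Fin k → ℕ) (hp : ∀ i, ((p i : ℕ∞)) ≤ bdeg i) (i : Fin k),
    ((p i : ℕ∞)) = bdeg i →
      ¬∃ g : Λ.Mor, Λ.rng g = Λ.rng (mor p p le_rfl hp) ∧ Λ.deg g = unitVec i

namespace BPath

variable {Λ : KGraph k}

/-- The vertex `x(m ∧ d(x))` of a boundary path `x`. -/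
noncomputable def vtx (x : BPath Λ) (m : Fin k → ℕ) : Λ.Obj :=
  Λ.rng (x.mor (minDeg m x.bdeg) (minDeg m x.bdeg) le_rfl (fun i => minDeg_le_deg m x.bdeg i))

/-- The range `x(0)` of a boundary path. -/
noncomputable def range (x : BPath Λ) : Λ.Obj := x.vtx 0

/-- The segment `x(m ∧ d(x), n ∧ d(x))` of a boundary path. -/
noncomputable def seg (x : BPath Λ) (m n : Fin k → ℕ) (h : m ≤ n) : Λ.Mor :=
  x.mor (minDeg m x.bdeg) (minDeg n x.bdeg) (minDeg_mono h x.bdeg)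
    (fun i => minDeg_le_deg n x.bdeg i)

/-- `σᵃ(x) = σᵇ(x)`: the two shifted boundary paths coincide. -/
def shiftsEq (x : BPath Λ) (a b : Fin k → ℕ) : Prop :=
  (∀ i, x.bdeg i - (a i : ℕ∞) = x.bdeg i - (b i : ℕ∞)) ∧
  ∀ (p q : Fin k → ℕ) (hpq : p ≤ q)
    (hqa : ∀ i, (((q + a) i : ℕ∞)) ≤ x.bdeg i) (hqb : ∀ i, (((q + b) i : ℕ∞)) ≤ x.bdeg i),
    x.mor (p + a) (q + a) (add_le_add_left hpq a) hqa =
      x.mor (p + b) (q + b) (add_le_add_left hpq b) hqb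

end BPath

/-- `Λ` is aperiodic. -/
def Aperiodic (Λ : KGraph k) : Prop :=
  ∀ (v : Λ.Obj) (m n : Fin k → ℕ), m ≠ n →
    ∃ x : BPath Λ, x.range = v ∧
      ((fun i => m i - minDeg m x.bdeg i) ≠ (fun i => n i - minDeg n x.bdeg i) ∨
        ¬ x.shiftsEq (minDeg m x.bdeg) (minDeg n x.bdeg))

/-- `Λ` is strongly aperiodic: every quotient graph is aperiodic. -/
def StronglyAperiodic (Λ : KGraph k) : Prop :=
  ∀ (H : Set Λ.Obj) (hH : Λ.Hereditary H), Λ.Saturated H → Aperiodic (Λ.minus H hH)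

end KGraph

open scoped Classical

namespace KGraph

/-! ## Kumjian–Pask families and algebras -/

/-- A Kumjian–Pask `Λ`-family `(P, S, S')` in a (possibly nonunital) `R`-algebra `A`.
Here `S` is extended to vertices by `S (id v) = P v` (and similarly for the ghost
elements `S'`), which encodes the usual convention `s_v := p_v`. -/
structure KPFamily {k : ℕ} (Λ : KGraph k) (R : Type) [CommRing R] (A : Type)
    [NonUnitalRing A] [Module R A] [SMulCommClass R A A] [IsScalarTower R A A] where
  P : Λ.Obj → A
  S : Λ.Mor → A
  S' : Λ.Mor → A
  S_id : ∀ v, S (Λ.id v) = P v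
  S'_id : ∀ v, S' (Λ.id v) = P v
  P_mul_self : ∀ v, P v * P v = P v
  P_orthogonal : ∀ v w, v ≠ w → P v * P w = 0
  S_comp : ∀ f g (h : Λ.src f = Λ.rng g), S f * S g = S (Λ.comp f g h)
  S'_comp : ∀ f g (h : Λ.src f = Λ.rng g), S' g * S' f = S' (Λ.comp f g h)
  P_S : ∀ f, P (Λ.rng f) * S f = S f
  S_P : ∀ f, S f * P (Λ.src f) = S f
  P_S' : ∀ f, P (Λ.src f) * S' f = S' f
  S'_P : ∀ f, S' f * P (Λ.rng f) = S' f
  KP3 : ∀ (n : Fin k → ℕ), n ≠ 0 → ∀ f ∈ Λ.LeSet n, ∀ g ∈ Λ.LeSet n,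
    S' f * S g = if f = g then P (Λ.src f) else 0
  KP4 : ∀ (v : Λ.Obj) (n : Fin k → ℕ), n ≠ 0 →
    P v = ∑ᶠ f ∈ {g : Λ.Mor | g ∈ Λ.LeSet n ∧ Λ.rng g = v}, S f * S' f

/-- `A` (a possibly nonunital `R`-algebra) is *the* Kumjian–Pask algebra of `Λ`:
it carries a Kumjian–Pask family which spans it and is universal among
Kumjian–Pask families. -/
structure IsKPAlgebra {k : ℕ} (Λ : KGraph k) (R : Type) [CommRing R] (A : Type)
    [NonUnitalRing A] [Module R A] [SMulCommClass R A A] [IsScalarTower R A A] :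
    Type 1 where
  fam : KPFamily Λ R A
  spanning : ∀ a : A, a ∈ Submodule.span R
    {x : A | ∃ f g : Λ.Mor, Λ.src f = Λ.src g ∧ x = fam.S f * fam.S' g}
  universal : ∀ (B : Type) [NonUnitalRing B] [Module R B] [SMulCommClass R B B]
      [IsScalarTower R B B] (F : KPFamily Λ R B),
      ∃ φ : A →ₙₐ[R] B, (∀ v, φ (fam.P v) = F.P v) ∧
        (∀ f, φ (fam.S f) = F.S f) ∧ (∀ f, φ (fam.S' f) = F.S' f)

variable {k : ℕ} {Λ : KGraph k} {R : Type} [CommRing R] {A : Type}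
  [NonUnitalRing A] [Module R A] [SMulCommClass R A A] [IsScalarTower R A A]

/-- The degree-`n` homogeneous component of the `ℤᵏ`-grading of a Kumjian–Pask algebra. -/
def KPFamily.component (F : KPFamily Λ R A) (n : Fin k → ℤ) : Submodule R A :=
  Submodule.span R {x : A | ∃ f g : Λ.Mor, Λ.src f = Λ.src g ∧
    (fun i => (Λ.deg f i : ℤ) - (Λ.deg g i : ℤ)) = n ∧ x = F.S f * F.S' g}

/-- A two-sided ideal is graded if it is spanned by its intersections with the
homogeneous components. -/
def KPFamily.IsGradedIdeal (F : KPFamily Λ R A) (I : TwoSidedIdeal A) : Prop :=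
  (I : Set A) ⊆
    ↑(Submodule.span R (⋃ n : Fin k → ℤ, ((I : Set A) ∩ (F.component n : Set A))))

/-- A two-sided ideal is basic if `r • p_v ∈ I` for `r ≠ 0` implies `p_v ∈ I`. -/
def KPFamily.IsBasicIdeal (F : KPFamily Λ R A) (I : TwoSidedIdeal A) : Prop :=
  ∀ (r : R) (v : Λ.Obj), r ≠ 0 → r • F.P v ∈ I → F.P v ∈ I

/-- The span `I_H = span_R {s_f s_g* : s(f) = s(g) ∈ H}` (a two-sided ideal when `H`
is saturated and hereditary). -/
def KPFamily.IH (F : KPFamily Λ R A) (H : Set Λ.Obj) : Submodule R A :=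
  Submodule.span R {x : A | ∃ f g : Λ.Mor, Λ.src f = Λ.src g ∧ Λ.src f ∈ H ∧
    x = F.S f * F.S' g}

end KGraph

/-! ## Prime and primitive rings and ideals -/

/-- A two-sided ideal `P` is prime: it is proper, and `I₁I₂ ⊆ P` implies `I₁ ⊆ P` or
`I₂ ⊆ P` for two-sided ideals `I₁, I₂`. -/
def IsPrimeTwoSidedIdeal {A : Type} [NonUnitalRing A] (P : TwoSidedIdeal A) : Prop :=
  (P : Set A) ≠ Set.univ ∧
  ∀ I J : TwoSidedIdeal A, (∀ x ∈ I, ∀ y ∈ J, x * y ∈ P) →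
    (I : Set A) ⊆ (P : Set A) ∨ (J : Set A) ⊆ (P : Set A)

/-- A (possibly nonunital) ring is prime if its zero ideal is prime. -/
def IsPrimeRing (A : Type) [NonUnitalRing A] : Prop :=
  IsPrimeTwoSidedIdeal (⊥ : TwoSidedIdeal A)

/-- A two-sided ideal `I` of a (possibly nonunital) ring is left primitive: there is a
simple left module (for the quotient ring, encoded as an `A`-module structure on an
additive group `M`) whose annihilator is exactly `I`.  For `I = ⊥` this says that `A`
has a faithful simple left module. -/
def IsPrimitiveTwoSidedIdeal {A : Type} [NonUnitalRing A] (I : TwoSidedIdeal A) : Prop :=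
  ∃ (M : Type) (_ : AddCommGroup M) (sm : A → M → M),
    (∀ a b m, sm (a + b) m = sm a m + sm b m) ∧
    (∀ a m n, sm a (m + n) = sm a m + sm a n) ∧
    (∀ a b m, sm (a * b) m = sm a (sm b m)) ∧
    (∃ a m, sm a m ≠ 0) ∧
    (∀ N : AddSubgroup M, (∀ a : A, ∀ m ∈ N, sm a m ∈ N) → N = ⊥ ∨ N = ⊤) ∧
    {a : A | ∀ m, sm a m = 0} = (I : Set A)

/-- A (possibly nonunital) ring is left primitive if it has a faithful simple left
module. -/
def IsLeftPrimitiveRing (A : Type) [NonUnitalRing A] : Prop :=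
  IsPrimitiveTwoSidedIdeal (⊥ : TwoSidedIdeal A)

namespace KGraph

/-! ## The desourcification -/

variable {k : ℕ}

/-- The key invariant of a pair `(x; m)` in `V_Λ`: the vertex `x(m ∧ d(x))` and
`m - m ∧ d(x)`.  Two pairs are `≈`-equivalent iff their keys agree. -/
noncomputable def vkey (Λ : KGraph k) : BPath Λ × (Fin k → ℕ) → Λ.Obj × (Fin k → ℕ) :=
  fun t => (t.1.vtx t.2, fun i => t.2 i - minDeg t.2 t.1.bdeg i)

/-- The vertex set `V_Λ / ≈` of the desourcification. -/
def VQ (Λ : KGraph k) : Type := Quotient (Setoid.ker (vkey Λ))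

/-- The class `[x; m]`. -/
noncomputable def vmk (Λ : KGraph k) (x : BPath Λ) (m : Fin k → ℕ) : VQ Λ :=
  Quotient.mk (Setoid.ker (vkey Λ)) (x, m)

/-- The set `P_Λ` of triples `(x; (m, n))` with `m ≤ n`. -/
def PPre (Λ : KGraph k) : Type := {t : BPath Λ × ((Fin k → ℕ) × (Fin k → ℕ)) // t.2.1 ≤ t.2.2}

/-- The key invariant of `(x; (m, n))`: the segment `x(m ∧ d(x), n ∧ d(x))`,
`m - m ∧ d(x)` and `n - m`.  Two triples are `∼`-equivalent iff their keys agree. -/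
noncomputable def pkey (Λ : KGraph k) : PPre Λ → Λ.Mor × ((Fin k → ℕ) × (Fin k → ℕ)) :=
  fun t => (t.1.1.seg t.1.2.1 t.1.2.2 t.2,
    (fun i => t.1.2.1 i - minDeg t.1.2.1 t.1.1.bdeg i, fun i => t.1.2.2 i - t.1.2.1 i))

/-- The morphism set `P_Λ / ∼` of the desourcification. -/
def PQ (Λ : KGraph k) : Type := Quotient (Setoid.ker (pkey Λ))

/-- The class `[x; (m, n)]`. -/
noncomputable def pmk (Λ : KGraph k) (x : BPath Λ) (m n : Fin k → ℕ) (h : m ≤ n) : PQ Λ :=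
  Quotient.mk (Setoid.ker (pkey Λ)) ⟨(x, (m, n)), h⟩

/-- `w` is the boundary path `x(0, a) σᵇ(y)` obtained by gluing the initial segment
`x(0,a)` of `x` with the shift `σᵇ(y)` of `y`. -/
def IsGluing {Λ : KGraph k} (x : BPath Λ) (a : Fin k → ℕ) (y : BPath Λ) (b : Fin k → ℕ)
    (w : BPath Λ) : Prop :=
  (∀ i, w.bdeg i = (a i : ℕ∞) + (y.bdeg i - (b i : ℕ∞))) ∧
  (∀ (h1 : (0 : Fin k → ℕ) ≤ a) (h2 : ∀ i, ((a i : ℕ∞)) ≤ w.bdeg i)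
      (h3 : ∀ i, ((a i : ℕ∞)) ≤ x.bdeg i),
    w.mor 0 a h1 h2 = x.mor 0 a h1 h3) ∧
  (∀ (p q : Fin k → ℕ) (hpq : p ≤ q) (h2 : ∀ i, (((a + q) i : ℕ∞)) ≤ w.bdeg i)
      (h4 : ∀ i, (((b + q) i : ℕ∞)) ≤ y.bdeg i),
    w.mor (a + p) (a + q) (add_le_add_right hpq a) h2 =
      y.mor (b + p) (b + q) (add_le_add_right hpq b) h4)

/-- `Λt` is (a realization of) the desourcification `Λ̃` of `Λ`: its vertices and
morphisms are identified with `V_Λ/≈` and `P_Λ/∼`, with range, source, degree,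
identities and composition given by the defining formulas of Farthing's construction. -/
structure Desourcification (Λ Λt : KGraph k) : Type where
  eObj : VQ Λ ≃ Λt.Obj
  eMor : PQ Λ ≃ Λt.Mor
  rng_eq : ∀ (x : BPath Λ) (m n : Fin k → ℕ) (h : m ≤ n),
    Λt.rng (eMor (pmk Λ x m n h)) = eObj (vmk Λ x m)
  src_eq : ∀ (x : BPath Λ) (m n : Fin k → ℕ) (h : m ≤ n),
    Λt.src (eMor (pmk Λ x m n h)) = eObj (vmk Λ x n)
  deg_eq : ∀ (x : BPath Λ) (m n : Fin k → ℕ) (h : m ≤ n),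
    Λt.deg (eMor (pmk Λ x m n h)) = n - m
  id_eq : ∀ (x : BPath Λ) (m : Fin k → ℕ),
    Λt.id (eObj (vmk Λ x m)) = eMor (pmk Λ x m m le_rfl)
  comp_eq : ∀ (x : BPath Λ) (m n : Fin k → ℕ) (hmn : m ≤ n)
      (y : BPath Λ) (p q : Fin k → ℕ) (hpq : p ≤ q)
      (h : Λt.src (eMor (pmk Λ x m n hmn)) = Λt.rng (eMor (pmk Λ y p q hpq)))
      (w : BPath Λ), IsGluing x (minDeg n x.bdeg) y (minDeg p y.bdeg) w →
    Λt.comp (eMor (pmk Λ x m n hmn)) (eMor (pmk Λ y p q hpq)) h =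
      eMor (pmk Λ w m (n + (q - p)) (hmn.trans le_self_add))

/-- `w = l x` is the boundary path extending the boundary path `x` by the
morphism `l` (with `x(0) = s(l)`). -/
def IsExtension {Λ : KGraph k} (l : Λ.Mor) (x : BPath Λ) (w : BPath Λ) : Prop :=
  (∀ i, w.bdeg i = (Λ.deg l i : ℕ∞) + x.bdeg i) ∧
  (∀ (h1 : (0 : Fin k → ℕ) ≤ Λ.deg l) (h2 : ∀ i, ((Λ.deg l i : ℕ∞)) ≤ w.bdeg i),
    w.mor 0 (Λ.deg l) h1 h2 = l) ∧
  (∀ (p q : Fin k → ℕ) (hpq : p ≤ q)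
      (h2 : ∀ i, (((Λ.deg l + q) i : ℕ∞)) ≤ w.bdeg i)
      (h4 : ∀ i, ((q i : ℕ∞)) ≤ x.bdeg i),
    w.mor (Λ.deg l + p) (Λ.deg l + q) (add_le_add_right hpq (Λ.deg l)) h2 =
      x.mor p q hpq h4)

/-- The graph of the map `ι : Λ → Λ̃`, `ι(l) = [l x; (0, d(l))]` for any
`x ∈ s(l)Λ^{≤∞}`. -/
def IotaRel {Λ Λt : KGraph k} (D : Desourcification Λ Λt) (l : Λ.Mor) (a : Λt.Mor) :
    Prop :=
  ∃ x w : BPath Λ, x.range = Λ.src l ∧ IsExtension l x w ∧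
    a = D.eMor (pmk Λ w 0 (Λ.deg l) (fun i => Nat.zero_le _))

/-- The graph of the map `π : Λ̃ → ι(Λ)`, `π([x; (m, n)]) = [x; (m ∧ d(x), n ∧ d(x))]`. -/
def PiRel {Λ Λt : KGraph k} (D : Desourcification Λ Λt) (a b : Λt.Mor) : Prop :=
  ∃ (x : BPath Λ) (m n : Fin k → ℕ) (hmn : m ≤ n),
    a = D.eMor (pmk Λ x m n hmn) ∧
    b = D.eMor (pmk Λ x (minDeg m x.bdeg) (minDeg n x.bdeg) (minDeg_mono hmn x.bdeg))

/-- The graph of the vertex map of `π : Λ̃ → ι(Λ)`, `π([x; m]) = [x; m ∧ d(x)]`. -/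
def PiVRel {Λ Λt : KGraph k} (D : Desourcification Λ Λt) (u u' : Λt.Obj) : Prop :=
  ∃ (x : BPath Λ) (m : Fin k → ℕ),
    u = D.eObj (vmk Λ x m) ∧ u' = D.eObj (vmk Λ x (minDeg m x.bdeg))

end KGraph

section Abstract

variable {A B : Type} [NonUnitalRing A] [Ring B] (f : A → B)

theorem f_zero (hadd : ∀ a b, f (a + b) = f a + f b) : f 0 = 0 := by
  have := hadd 0 0
  rw [add_zero] at this
  exact left_eq_add.mp this

theorem f_neg (hadd : ∀ a b, f (a + b) = f a + f b) (a : A) : f (-a) = - f a := by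
  have h := hadd (-a) a
  rw [neg_add_cancel, f_zero f hadd] at h
  exact eq_neg_of_add_eq_zero_left h.symm

/-- pullback of a two-sided ideal along `f`. -/
def pullback (hadd : ∀ a b, f (a + b) = f a + f b) (hmul : ∀ a b, f (a * b) = f a * f b)
    (hl : ∀ (x : B) (a : A), ∃ c, x * f a = f c)
    (hr : ∀ (x : B) (a : A), ∃ c, f a * x = f c)
    (I : TwoSidedIdeal B) : TwoSidedIdeal A :=
  TwoSidedIdeal.mk' {a : A | f a ∈ I}
    (by simp only [Set.mem_setOf_eq, f_zero f hadd]; exact TwoSidedIdeal.zero_mem I)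
    (fun {x y} hx hy => by simp only [Set.mem_setOf_eq, hadd]; exact I.add_mem hx hy)
    (fun {x} hx => by simp only [Set.mem_setOf_eq, f_neg f hadd]; exact I.neg_mem hx)
    (fun {x y} hy => by simp only [Set.mem_setOf_eq, hmul]; exact I.mul_mem_left _ _ hy)
    (fun {x y} hx => by simp only [Set.mem_setOf_eq, hmul]; exact I.mul_mem_right _ _ hx)

theorem prime_B (hadd : ∀ a b, f (a + b) = f a + f b) (hmul : ∀ a b, f (a * b) = f a * f b)
    (hinj : Function.Injective f)
    (hl : ∀ (x : B) (a : A), ∃ c, x * f a = f c)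
    (hr : ∀ (x : B) (a : A), ∃ c, f a * x = f c)
    (hfl : ∀ x : B, (∀ a, f a * x = 0) → x = 0)
    (hfr : ∀ x : B, (∀ a, x * f a = 0) → x = 0)
    (hA : IsPrimeRing A) : IsPrimeRing B := by
  obtain ⟨hAne, hAp⟩ := hA
  -- A is nontrivial
  obtain ⟨a₀, ha₀⟩ : ∃ a : A, a ≠ 0 := by
    by_contra h
    push_neg at h
    exact hAne (Set.eq_univ_iff_forall.mpr fun x =>
      SetLike.mem_coe.mpr ((TwoSidedIdeal.mem_bot (R := _)).mpr (h x)))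
  constructor
  · intro h
    have : f a₀ ∈ (⊥ : TwoSidedIdeal B) := by
      rw [← SetLike.mem_coe, h]; trivial
    rw [TwoSidedIdeal.mem_bot] at this
    exact ha₀ (hinj (this.trans (f_zero f hadd).symm))
  · intro I J hIJ
    have hkey : ∀ K : TwoSidedIdeal B,
        ((pullback f hadd hmul hl hr K : Set A) ⊆ ((⊥ : TwoSidedIdeal A) : Set A)) →
        (∀ x ∈ K, x = 0) → True := fun _ _ _ => trivial
    have hIp := hAp (pullback f hadd hmul hl hr I) (pullback f hadd hmul hl hr J) ?_
    · -- from pullback ⊆ ⊥ conclude the ideal itself is ⊥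
      have main : ∀ K : TwoSidedIdeal B,
          ((pullback f hadd hmul hl hr K : Set A) ⊆ ((⊥ : TwoSidedIdeal A) : Set A)) →
          (K : Set B) ⊆ ((⊥ : TwoSidedIdeal B) : Set B) := by
        intro K hK x hx
        rw [SetLike.mem_coe] at hx
        have hx0 : x = 0 := by
          apply hfr
          intro b
          apply hfl
          intro a
          obtain ⟨c, hc⟩ := hl x b
          have h1 : f a * (x * f b) = f (a * c) := by rw [hc, hmul]
          have h2 : a * c ∈ pullback f hadd hmul hl hr K := by
            rw [pullback, TwoSidedIdeal.mem_mk', Set.mem_setOf_eq, ← h1]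
            exact K.mul_mem_left _ _ (K.mul_mem_right _ _ hx)
          have := hK (SetLike.mem_coe.mpr h2)
          rw [SetLike.mem_coe, TwoSidedIdeal.mem_bot] at this
          rw [h1, this, f_zero f hadd]
        rw [hx0]
        exact SetLike.mem_coe.mpr ((TwoSidedIdeal.mem_bot (R := _)).mpr rfl)
      rcases hIp with h | h
      · exact Or.inl (main I h)
      · exact Or.inr (main J h)
    · intro a ha b hb
      rw [TwoSidedIdeal.mem_bot]
      apply hinj
      rw [hmul, f_zero f hadd]
      rw [pullback, TwoSidedIdeal.mem_mk', Set.mem_setOf_eq] at ha hb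
      have := hIJ _ ha _ hb
      rwa [TwoSidedIdeal.mem_bot] at this

end Abstract

section Prim

variable {A B : Type} [NonUnitalRing A] [Ring B] (f : A → B)

-- generic helper lemmas about actions
theorem sm_zero_right {M : Type} [AddCommGroup M] (sm : A → M → M)
    (h2 : ∀ a m n, sm a (m + n) = sm a m + sm a n) (a : A) : sm a 0 = 0 := by
  have := h2 a 0 0
  rw [add_zero] at this
  exact (left_eq_add.mp this)

theorem sm_zero_left {M : Type} [AddCommGroup M] (sm : A → M → M)
    (h1 : ∀ a b m, sm (a + b) m = sm a m + sm b m) (m : M) : sm 0 m = 0 := by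
  have := h1 0 0 m
  rw [add_zero] at this
  exact (left_eq_add.mp this)

theorem sm_neg_right {M : Type} [AddCommGroup M] (sm : A → M → M)
    (h2 : ∀ a m n, sm a (m + n) = sm a m + sm a n) (a : A) (m : M) :
    sm a (-m) = - sm a m := by
  have := h2 a (-m) m
  rw [neg_add_cancel, sm_zero_right sm h2] at this
  exact eq_neg_of_add_eq_zero_left this.symm

theorem prim_down
    (hadd : ∀ a b, f (a + b) = f a + f b) (hmul : ∀ a b, f (a * b) = f a * f b)
    (hinj : Function.Injective f)
    (hl : ∀ (x : B) (a : A), ∃ c, x * f a = f c)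
    (hr : ∀ (x : B) (a : A), ∃ c, f a * x = f c)
    (hAne : ∃ a : A, a ≠ 0)
    (hB : IsLeftPrimitiveRing B) : IsLeftPrimitiveRing A := by
  obtain ⟨M, _, sm2, h1, h2, h3, hne, hsimp, hfaith⟩ := hB
  have hfaith' : ∀ x : B, (∀ m, sm2 x m = 0) → x = 0 := by
    intro x hx
    have : x ∈ {x : B | ∀ m, sm2 x m = 0} := hx
    rw [hfaith, SetLike.mem_coe, TwoSidedIdeal.mem_bot] at this
    exact this
  obtain ⟨a₀, ha₀⟩ := hAne
  refine ⟨M, inferInstance, fun c m => sm2 (f c) m, ?_, ?_, ?_, ?_, ?_, ?_⟩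
  · intro a b m; show sm2 (f (a + b)) m = _; rw [hadd, h1]
  · intro a m n; show sm2 (f a) (m + n) = _; rw [h2]
  · intro a b m; show sm2 (f (a * b)) m = _; rw [hmul, h3]
  · -- nonzero
    have hfa : f a₀ ≠ 0 := fun h => ha₀ (hinj (h.trans (f_zero f hadd).symm))
    by_contra h
    push_neg at h
    exact hfa (hfaith' _ (h a₀))
  · -- simplicity
    intro N hN
    by_cases hNbot : N = ⊥
    · exact Or.inl hNbot
    right
    -- N₀ : elements killed by all f c
    set N₀ : AddSubgroup M :=
      { carrier := {m | ∀ c : A, sm2 (f c) m = 0}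
        zero_mem' := fun c => sm_zero_right sm2 h2 _
        add_mem' := fun {x y} hx hy c => by rw [h2, hx c, hy c, add_zero]
        neg_mem' := fun {x} hx c => by rw [sm_neg_right sm2 h2, hx c, neg_zero] } with hN₀
    have hN₀stable : ∀ x : B, ∀ m ∈ N₀, sm2 x m ∈ N₀ := by
      intro x m hm c
      obtain ⟨d, hd⟩ := hr x c
      rw [← h3, hd, hm d]
    have hN₀bot : N₀ = ⊥ := by
      rcases hsimp N₀ hN₀stable with h | h
      · exact h
      · exfalso
        have : ∀ c : A, f c = 0 := by
          intro c
          apply hfaith'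
          intro m
          have hm : m ∈ N₀ := by rw [h]; exact AddSubgroup.mem_top m
          exact hm c
        exact ha₀ (hinj ((this a₀).trans (f_zero f hadd).symm))
    -- N' : subgroup generated by sm c n, n ∈ N
    set N' : AddSubgroup M := AddSubgroup.closure {m | ∃ c : A, ∃ n ∈ N, m = sm2 (f c) n}
      with hN'
    have hN'leN : N' ≤ N := by
      rw [hN']
      apply AddSubgroup.closure_le _ |>.mpr
      rintro m ⟨c, n, hn, rfl⟩
      exact hN c n hn
    have hN'stable : ∀ x : B, ∀ m ∈ N', sm2 x m ∈ N' := by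
      intro x m hm
      induction hm using AddSubgroup.closure_induction with
      | mem m hm =>
        obtain ⟨c, n, hn, rfl⟩ := hm
        obtain ⟨d, hd⟩ := hl x c
        apply AddSubgroup.subset_closure
        refine ⟨d, n, hn, ?_⟩
        rw [← h3, hd]
      | zero => rw [sm_zero_right sm2 h2]; exact N'.zero_mem
      | add a b _ _ ha hb => rw [h2]; exact N'.add_mem ha hb
      | neg a _ ha => rw [sm_neg_right sm2 h2]; exact N'.neg_mem ha
    rcases hsimp N' hN'stable with h | h
    · -- then N ⊆ N₀ = ⊥, contradiction
      exfalso
      apply hNbot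
      have hle : N ≤ N₀ := by
        intro m hm c
        have : sm2 (f c) m ∈ N' := AddSubgroup.subset_closure ⟨c, m, hm, rfl⟩
        rw [h, AddSubgroup.mem_bot] at this
        exact this
      rw [← le_bot_iff, ← hN₀bot]
      exact hle
    · exact top_le_iff.mp (h ▸ hN'leN)
  · -- faithfulness
    ext c
    simp only [Set.mem_setOf_eq, SetLike.mem_coe, TwoSidedIdeal.mem_bot]
    constructor
    · intro hc
      exact hinj ((hfaith' _ hc).trans (f_zero f hadd).symm)
    · intro hc m
      rw [hc, f_zero f hadd, sm_zero_left sm2 h1]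

end Prim

section PrimUp

variable {A B : Type} [NonUnitalRing A] [Ring B] (f : A → B)

theorem sm_sub_right {M : Type} [AddCommGroup M] {A : Type} [NonUnitalRing A] (sm : A → M → M)
    (h2 : ∀ a m n, sm a (m + n) = sm a m + sm a n) (a : A) (m n : M) :
    sm a (m - n) = sm a m - sm a n := by
  rw [sub_eq_add_neg, h2, sm_neg_right sm h2, sub_eq_add_neg]

theorem prim_up
    (hadd : ∀ a b, f (a + b) = f a + f b) (hmul : ∀ a b, f (a * b) = f a * f b)
    (hinj : Function.Injective f)
    (hl : ∀ (x : B) (a : A), ∃ c, x * f a = f c)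
    (hr : ∀ (x : B) (a : A), ∃ c, f a * x = f c)
    (hfl : ∀ x : B, (∀ a, f a * x = 0) → x = 0)
    (hA : IsLeftPrimitiveRing A) : IsLeftPrimitiveRing B := by
  classical
  obtain ⟨M, _, sm, h1, h2, h3, hne, hsimp, hfaith⟩ := hA
  have hfaith' : ∀ a : A, (∀ m, sm a m = 0) → a = 0 := by
    intro a ha
    have : a ∈ {a : A | ∀ m, sm a m = 0} := ha
    rw [hfaith, SetLike.mem_coe, TwoSidedIdeal.mem_bot] at this
    exact this
  -- the auxiliary right action of B on A
  have hract : ∀ (a : A) (x : B), ∃ c, f a * x = f c := fun a x => hr x a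
  set ract : A → B → A := fun a x => Classical.choose (hract a x) with hractdef
  have ract_spec : ∀ (a : A) (x : B), f a * x = f (ract a x) :=
    fun a x => Classical.choose_spec (hract a x)
  -- the kernel subgroup
  set Z : AddSubgroup M :=
    { carrier := {n | ∀ a : A, sm a n = 0}
      zero_mem' := fun a => sm_zero_right sm h2 _
      add_mem' := fun {x y} hx hy a => by rw [h2, hx a, hy a, add_zero]
      neg_mem' := fun {x} hx a => by rw [sm_neg_right sm h2, hx a, neg_zero] } with hZ
  have hZbot : Z = ⊥ := by
    rcases hsimp Z (fun a m hm b => by rw [← h3]; exact hm (b * a)) with h | h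
    · exact h
    · exfalso
      obtain ⟨a, m, ham⟩ := hne
      have hm : m ∈ Z := by rw [h]; exact AddSubgroup.mem_top m
      exact ham (hm a)
  have hZmem : ∀ n : M, (∀ a : A, sm a n = 0) → n = 0 := by
    intro n hn
    have : n ∈ Z := hn
    rwa [hZbot, AddSubgroup.mem_bot] at this
  -- M = AM
  have hT : (AddSubgroup.closure {m : M | ∃ (c : A) (n : M), m = sm c n}) = ⊤ := by
    have hstab : ∀ a : A, ∀ m ∈ (AddSubgroup.closure {m : M | ∃ (c : A) (n : M), m = sm c n}),
        sm a m ∈ AddSubgroup.closure {m : M | ∃ (c : A) (n : M), m = sm c n} := by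
      intro a m hm
      induction hm using AddSubgroup.closure_induction with
      | mem m hm =>
        obtain ⟨c, n, rfl⟩ := hm
        exact AddSubgroup.subset_closure ⟨a * c, n, (h3 a c n).symm⟩
      | zero => rw [sm_zero_right sm h2]; exact AddSubgroup.zero_mem _
      | add u v _ _ hu hv => rw [h2]; exact AddSubgroup.add_mem _ hu hv
      | neg u _ hu => rw [sm_neg_right sm h2]; exact AddSubgroup.neg_mem _ hu
    rcases hsimp _ hstab with h | h
    · exfalso
      obtain ⟨a, m, ham⟩ := hne
      have : sm a m ∈ AddSubgroup.closure {m : M | ∃ (c : A) (n : M), m = sm c n} :=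
        AddSubgroup.subset_closure ⟨a, m, rfl⟩
      rw [h, AddSubgroup.mem_bot] at this
      exact ham this
    · exact h
  -- existence of the extended action
  have hex : ∀ (x : B) (m : M), ∃ u : M, ∀ a : A, sm a u = sm (ract a x) m := by
    intro x m
    have hm : m ∈ AddSubgroup.closure {m : M | ∃ (c : A) (n : M), m = sm c n} := by
      rw [hT]; exact AddSubgroup.mem_top m
    induction hm using AddSubgroup.closure_induction with
    | mem m hm =>
      obtain ⟨c, n, rfl⟩ := hm
      obtain ⟨d, hd⟩ := hl x c
      refine ⟨sm d n, fun a => ?_⟩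
      have key : a * d = ract a x * c := by
        apply hinj
        rw [hmul, hmul, ← hd, ← ract_spec, mul_assoc]
      rw [← h3, key, h3]
    | zero => exact ⟨0, fun a => by rw [sm_zero_right sm h2, sm_zero_right sm h2]⟩
    | add u v _ _ hu hv =>
      obtain ⟨p, hp⟩ := hu
      obtain ⟨q, hq⟩ := hv
      exact ⟨p + q, fun a => by rw [h2, h2, hp a, hq a]⟩
    | neg u _ hu =>
      obtain ⟨p, hp⟩ := hu
      exact ⟨-p, fun a => by
        rw [sm_neg_right sm h2, sm_neg_right sm h2, hp a]⟩
  set sm2 : B → M → M := fun x m => Classical.choose (hex x m) with hsm2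
  have hspec : ∀ (x : B) (m : M) (a : A), sm a (sm2 x m) = sm (ract a x) m :=
    fun x m => Classical.choose_spec (hex x m)
  have huni : ∀ (x : B) (m : M) (u : M), (∀ a : A, sm a u = sm (ract a x) m) → u = sm2 x m := by
    intro x m u hu
    have : ∀ a : A, sm a (u - sm2 x m) = 0 := by
      intro a
      rw [sm_sub_right sm h2, hu a, hspec x m a, sub_self]
    have := hZmem _ this
    exact sub_eq_zero.mp this
  have ract_add : ∀ (a : A) (x y : B), ract a (x + y) = ract a x + ract a y := by
    intro a x y
    apply hinj
    rw [← ract_spec, hadd, ← ract_spec, ← ract_spec, mul_add]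
  have ract_mul : ∀ (a : A) (x y : B), ract a (x * y) = ract (ract a x) y := by
    intro a x y
    apply hinj
    rw [← ract_spec, ← ract_spec, ← ract_spec, mul_assoc]
  have ract_f : ∀ (a c : A), ract a (f c) = a * c := by
    intro a c
    apply hinj
    rw [← ract_spec, hmul]
  have sm2_f : ∀ (c : A) (m : M), sm2 (f c) m = sm c m := by
    intro c m
    refine (huni (f c) m (sm c m) fun a => ?_).symm
    rw [← h3, ract_f]
  have sm2_zero : ∀ m : M, sm2 (0 : B) m = 0 := by
    intro m
    refine (huni 0 m 0 fun a => ?_).symm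
    have : ract a (0 : B) = 0 := by
      apply hinj
      rw [← ract_spec, mul_zero, f_zero f hadd]
    rw [this, sm_zero_right sm h2, sm_zero_left sm h1]
  refine ⟨M, inferInstance, sm2, ?_, ?_, ?_, ?_, ?_, ?_⟩
  · intro x y m
    refine (huni (x + y) m _ fun a => ?_).symm
    rw [h2, hspec, hspec, ract_add, h1]
  · intro x m n
    refine (huni x (m + n) _ fun a => ?_).symm
    rw [h2, hspec, hspec, h2]
  · intro x y m
    refine (huni (x * y) m _ fun a => ?_).symm
    rw [hspec, hspec, ract_mul]
  · obtain ⟨a, m, ham⟩ := hne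
    exact ⟨f a, m, by rw [sm2_f]; exact ham⟩
  · intro N hN
    exact hsimp N fun a m hm => by rw [← sm2_f]; exact hN (f a) m hm
  · ext x
    simp only [Set.mem_setOf_eq, SetLike.mem_coe, TwoSidedIdeal.mem_bot]
    constructor
    · intro hx
      apply hfl
      intro a
      rw [ract_spec]
      have : ract a x = 0 := by
        apply hfaith'
        intro m
        rw [← hspec x m a, hx m, sm_zero_right sm h2]
      rw [this, f_zero f hadd]
    · intro hx m
      rw [hx, sm2_zero]

end PrimUp

section Concrete

variable (R : Type) [Field R] (R₁ : Type) [NonUnitalRing R₁] [Module R R₁]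
  [SMulCommClass R R₁ R₁] [IsScalarTower R R₁ R₁]

/-- left multiplication, as an `R`-linear endomorphism -/
def mulL : R₁ → Module.End R R₁ := fun a => LinearMap.mulLeft R a

variable {R R₁}

theorem mulL_apply (a b : R₁) : mulL R R₁ a b = a * b := rfl

theorem mulL_add (a b : R₁) : mulL R R₁ (a + b) = mulL R R₁ a + mulL R R₁ b := by
  ext x; simp [mulL_apply, add_mul]

theorem mulL_mul (a b : R₁) : mulL R R₁ a * mulL R R₁ b = mulL R R₁ (a * b) := by
  ext x; simp [Module.End.mul_apply, mulL_apply, mul_assoc]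

theorem mulL_smul (r : R) (a : R₁) : mulL R R₁ (r • a) = r • mulL R R₁ a := by
  ext x; simp [mulL_apply, smul_mul_assoc]

theorem mulL_zero : mulL R R₁ (0 : R₁) = 0 := by
  ext x; simp [mulL_apply]

variable (R R₁) in
/-- the unital subalgebra `R·1 + L(R₁)` of `End R R₁`. -/
def R2Alg : Subalgebra R (Module.End R R₁) where
  carrier := {x | ∃ (r : R) (c : R₁), x = r • 1 + mulL R R₁ c}
  zero_mem' := ⟨0, 0, by simp [mulL_zero]⟩
  one_mem' := ⟨1, 0, by simp [mulL_zero]⟩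
  add_mem' := by
    rintro x y ⟨r, c, rfl⟩ ⟨s, d, rfl⟩
    exact ⟨r + s, c + d, by rw [mulL_add, add_smul]; abel⟩
  mul_mem' := by
    rintro x y ⟨r, c, rfl⟩ ⟨s, d, rfl⟩
    refine ⟨r * s, r • d + s • c + c * d, ?_⟩
    ext x
    simp only [Module.End.mul_apply, LinearMap.add_apply, LinearMap.smul_apply,
      Module.End.one_apply, mulL_apply, add_mul, mul_add, smul_mul_assoc, mul_smul_comm,
      smul_smul, smul_add, mul_assoc, mul_comm s r]
    abel
  algebraMap_mem' := fun r => ⟨r, 0, by rw [mulL_zero, add_zero, Algebra.algebraMap_eq_smul_one]⟩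

set_option synthInstance.maxHeartbeats 1000000 in
set_option maxHeartbeats 1000000 in
variable (R R₁) in
/-- the embedding of `R₁` into `R2Alg` as a non-unital algebra hom -/
def embedHom : R₁ →ₙₐ[R] (R2Alg R R₁) where
  toFun a := ⟨mulL R R₁ a, ⟨0, a, by simp⟩⟩
  map_add' a b := Subtype.ext (mulL_add a b)
  map_mul' a b := Subtype.ext (mulL_mul a b).symm
  map_zero' := Subtype.ext mulL_zero
  map_smul' r a := Subtype.ext (mulL_smul r a)

theorem embedHom_val (a : R₁) : (embedHom R R₁ a : Module.End R R₁) = mulL R R₁ a := rfl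

end Concrete

section Ann

variable {R₁ : Type} [NonUnitalRing R₁]

theorem leftAnn_trivial (hprime : IsPrimeRing R₁) (a : R₁) (h : ∀ b, a * b = 0) : a = 0 := by
  set I : TwoSidedIdeal R₁ := TwoSidedIdeal.mk' {a : R₁ | ∀ b, a * b = 0}
    (fun b => zero_mul b)
    (fun {x y} hx hy b => by rw [add_mul, hx b, hy b, add_zero])
    (fun {x} hx b => by rw [neg_mul, hx b, neg_zero])
    (fun {x y} hy b => by rw [mul_assoc, hy b, mul_zero])
    (fun {x y} hx b => by rw [mul_assoc, hx (y * b)]) with hI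
  rcases hprime.2 I ⊤ (fun x hx y _ => by
      rw [TwoSidedIdeal.mem_bot]
      rw [hI, TwoSidedIdeal.mem_mk', Set.mem_setOf_eq] at hx
      exact hx y) with hc | hc
  · have : a ∈ I := by rw [hI, TwoSidedIdeal.mem_mk']; exact h
    have := hc (SetLike.mem_coe.mpr this)
    rwa [SetLike.mem_coe, TwoSidedIdeal.mem_bot] at this
  · exfalso
    apply hprime.1
    apply Set.eq_univ_iff_forall.mpr
    intro x
    exact hc (SetLike.mem_coe.mpr (TwoSidedIdeal.mem_top R₁))

theorem rightAnn_trivial (hprime : IsPrimeRing R₁) (a : R₁) (h : ∀ b, b * a = 0) : a = 0 := by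
  set I : TwoSidedIdeal R₁ := TwoSidedIdeal.mk' {a : R₁ | ∀ b, b * a = 0}
    (fun b => mul_zero b)
    (fun {x y} hx hy b => by rw [mul_add, hx b, hy b, add_zero])
    (fun {x} hx b => by rw [mul_neg, hx b, neg_zero])
    (fun {x y} hy b => by rw [← mul_assoc, hy (b * x)])
    (fun {x y} hx b => by rw [← mul_assoc, hx b, zero_mul]) with hI
  rcases hprime.2 ⊤ I (fun x _ y hy => by
      rw [TwoSidedIdeal.mem_bot]
      rw [hI, TwoSidedIdeal.mem_mk', Set.mem_setOf_eq] at hy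
      exact hy x) with hc | hc
  · exfalso
    apply hprime.1
    apply Set.eq_univ_iff_forall.mpr
    intro x
    exact hc (SetLike.mem_coe.mpr (TwoSidedIdeal.mem_top R₁))
  · have : a ∈ I := by rw [hI, TwoSidedIdeal.mem_mk']; exact h
    have := hc (SetLike.mem_coe.mpr this)
    rwa [SetLike.mem_coe, TwoSidedIdeal.mem_bot] at this

end Ann


set_option maxHeartbeats 1600000 in
set_option synthInstance.maxHeartbeats 400000 in
/-- **Lemma 3.4.** If `R` is a field and `R₁` a (possibly nonunital) prime
`R`-algebra, then `R₁` embeds as a two-sided ideal in a unital prime `R`-algebra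
`R₂`, and `R₂` is left primitive iff `R₁` is left primitive. -/
theorem prime_algebra_embeds_as_ideal_in_unital_prime_algebra
    (R : Type) [Field R] (R₁ : Type) [NonUnitalRing R₁] [Module R R₁]
    [SMulCommClass R R₁ R₁] [IsScalarTower R R₁ R₁]
    (hprime : IsPrimeRing R₁) :
    ∃ (R₂ : Type) (_ : Ring R₂) (_ : Algebra R R₂),
      IsPrimeRing R₂ ∧
      ∃ f : R₁ →ₙₐ[R] R₂, Function.Injective f ∧
        (∃ I : TwoSidedIdeal R₂, (I : Set R₂) = Set.range f) ∧
        (IsLeftPrimitiveRing R₂ ↔ IsLeftPrimitiveRing R₁) := by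
  classical
  set B := ↥(R2Alg R R₁) with hB
  set f0 : R₁ → B := fun a => embedHom R R₁ a with hf0
  have hadd : ∀ a b, f0 (a + b) = f0 a + f0 b := fun a b => map_add (embedHom R R₁) a b
  have hmul : ∀ a b, f0 (a * b) = f0 a * f0 b := fun a b => map_mul (embedHom R R₁) a b
  have hval : ∀ a : R₁, (f0 a : Module.End R R₁) = mulL R R₁ a := fun _ => rfl
  have hinj : Function.Injective f0 := by
    intro a b hab
    have h1 : mulL R R₁ a = mulL R R₁ b := congrArg Subtype.val hab
    have h2 : ∀ x, (a - b) * x = 0 := by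
      intro x
      have := congrArg (fun g : Module.End R R₁ => g x) h1
      simp only [mulL_apply] at this
      rw [sub_mul, this, sub_self]
    have := leftAnn_trivial hprime _ h2
    exact sub_eq_zero.mp this
  have hcoe_mul : ∀ x y : B, ((x * y : B) : Module.End R R₁) = (x : Module.End R R₁) * y := by
    intro x y; rfl
  have hl : ∀ (x : B) (a : R₁), ∃ c, x * f0 a = f0 c := by
    intro x a
    obtain ⟨r, d, hx⟩ := x.2
    refine ⟨r • a + d * a, ?_⟩
    apply Subtype.ext
    rw [hcoe_mul, hval, hval, hx]
    ext b
    simp only [Module.End.mul_apply, LinearMap.add_apply, LinearMap.smul_apply,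
      Module.End.one_apply, mulL_apply, add_mul, smul_mul_assoc, mul_assoc]
  have hr : ∀ (x : B) (a : R₁), ∃ c, f0 a * x = f0 c := by
    intro x a
    obtain ⟨r, d, hx⟩ := x.2
    refine ⟨r • a + a * d, ?_⟩
    apply Subtype.ext
    rw [hcoe_mul, hval, hval, hx]
    ext b
    simp only [Module.End.mul_apply, LinearMap.add_apply, LinearMap.smul_apply,
      Module.End.one_apply, mulL_apply, add_mul, mul_add, smul_mul_assoc, mul_smul_comm,
      mul_assoc]
  have hfl : ∀ x : B, (∀ a, f0 a * x = 0) → x = 0 := by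
    intro x hx
    apply Subtype.ext
    ext b
    rw [ZeroMemClass.coe_zero, LinearMap.zero_apply]
    apply rightAnn_trivial hprime
    intro a
    have := congrArg Subtype.val (hx a)
    rw [hcoe_mul, hval] at this
    have := congrArg (fun g : Module.End R R₁ => g b) this
    simpa only [Module.End.mul_apply, mulL_apply, LinearMap.zero_apply,
      ZeroMemClass.coe_zero] using this
  have hfr : ∀ x : B, (∀ a, x * f0 a = 0) → x = 0 := by
    intro x hx
    obtain ⟨r, d, hxval⟩ := x.2
    have key : ∀ a : R₁, (x : Module.End R R₁) a = 0 := by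
      intro a
      have h2 : ∀ b : R₁, ((x : Module.End R R₁) a) * b = 0 := by
        intro b
        have := congrArg Subtype.val (hx a)
        rw [hcoe_mul, hval] at this
        have := congrArg (fun g : Module.End R R₁ => g b) this
        simp only [Module.End.mul_apply, mulL_apply, LinearMap.zero_apply,
          ZeroMemClass.coe_zero] at this
        calc ((x : Module.End R R₁) a) * b
            = r • (a * b) + d * (a * b) := by
              rw [hxval]
              simp only [LinearMap.add_apply, LinearMap.smul_apply, Module.End.one_apply,
                mulL_apply, add_mul, smul_mul_assoc, mul_assoc]
          _ = (x : Module.End R R₁) (a * b) := by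
              rw [hxval]
              simp only [LinearMap.add_apply, LinearMap.smul_apply, Module.End.one_apply,
                mulL_apply]
          _ = 0 := this
      exact leftAnn_trivial hprime _ h2
    apply Subtype.ext
    ext b
    rw [ZeroMemClass.coe_zero, LinearMap.zero_apply]
    exact key b
  have hAne : ∃ a : R₁, a ≠ 0 := by
    by_contra h
    push_neg at h
    exact hprime.1 (Set.eq_univ_iff_forall.mpr fun x =>
      SetLike.mem_coe.mpr ((TwoSidedIdeal.mem_bot (R := R₁)).mpr (h x)))
  refine ⟨B, inferInstance, inferInstance, prime_B f0 hadd hmul hinj hl hr hfl hfr hprime,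
    embedHom R R₁, hinj, ?_, ?_⟩
  · refine ⟨TwoSidedIdeal.mk' (Set.range f0)
      (show (0 : B) ∈ Set.range f0 from ⟨0, f_zero f0 hadd⟩)
      (fun {x y} hx hy => by
        obtain ⟨a, rfl⟩ := hx; obtain ⟨b, rfl⟩ := hy
        exact ⟨a + b, (hadd a b)⟩)
      (fun {x} hx => by
        obtain ⟨a, rfl⟩ := hx
        exact ⟨-a, f_neg f0 hadd a⟩)
      (fun {x y} hy => by
        obtain ⟨a, rfl⟩ := hy
        obtain ⟨c, hc⟩ := hl x a
        exact ⟨c, hc.symm⟩)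
      (fun {x y} hx => by
        obtain ⟨a, rfl⟩ := hx
        obtain ⟨c, hc⟩ := hr y a
        exact ⟨c, hc.symm⟩), ?_⟩
    rw [TwoSidedIdeal.coe_mk']
  · exact ⟨prim_down f0 hadd hmul hinj hl hr hAne,
      prim_up f0 hadd hmul hinj hl hr hfl⟩
end

section
/- A unital ring R is left primitive if and only if there exists a left ideal M of R with M ≠ R such that M + I = R for every nonzero two-sided ideal I of R. -/
open scoped ENat

open scoped Classical

/-- **Lemma 3.5.** A unital ring `R` is left primitive iff there is a left ideal
`M ≠ R` such that `M + I = R` for every nonzero two-sided ideal `I` of `R`. -/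
theorem unital_left_primitive_iff_exists_comaximal_left_ideal
    (R : Type) [Ring R] :
    (∃ (M : Type) (_ : AddCommGroup M) (_ : Module R M),
        IsSimpleModule R M ∧ FaithfulSMul R M) ↔
      ∃ M : Submodule R R, M ≠ ⊤ ∧
        ∀ I : TwoSidedIdeal R, I ≠ ⊥ → ∀ x : R, ∃ m ∈ M, ∃ a ∈ I, m + a = x := by
  constructor
  · rintro ⟨N, _, _, hsimp, hfaith⟩
    -- pick a nonzero element
    haveI := hsimp
    haveI : Nontrivial N := IsSimpleModule.nontrivial R N
    obtain ⟨n, hn⟩ := exists_ne (0 : N)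
    set φ : R →ₗ[R] N := LinearMap.toSpanSingleton R N n with hφ
    refine ⟨LinearMap.ker φ, ?_, ?_⟩
    · intro h
      have : (1 : R) ∈ LinearMap.ker φ := h ▸ Submodule.mem_top
      simp [φ, LinearMap.toSpanSingleton, LinearMap.mem_ker] at this
      exact hn this
    · intro I hI x
      -- I has a nonzero element
      have hex : ∃ a ∈ I, a ≠ 0 := by
        by_contra h
        push_neg at h
        apply hI
        refine TwoSidedIdeal.ext fun y => ?_
        rw [TwoSidedIdeal.mem_bot]
        exact ⟨fun hy => h y hy, fun hy => hy ▸ I.zero_mem⟩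
      obtain ⟨a, haI, ha0⟩ := hex
      -- a acts nontrivially on some element
      have hm : ∃ m : N, a • m ≠ 0 := by
        by_contra h
        push_neg at h
        apply ha0
        exact FaithfulSMul.eq_of_smul_eq_smul (α := N) fun m => by rw [h m, zero_smul]
      obtain ⟨m, hm⟩ := hm
      -- span of n is ⊤
      have hspan : Submodule.span R {n} = ⊤ := by
        rcases hsimp.1.2 (Submodule.span R {n}) with h | h
        · exfalso; apply hn
          have : n ∈ Submodule.span R {n} := Submodule.mem_span_singleton_self n
          rw [h] at this; simpa using this
        · exact h
      -- m = r • n for some r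
      have hmem : m ∈ Submodule.span R {n} := hspan ▸ Submodule.mem_top
      obtain ⟨r, hr⟩ := Submodule.mem_span_singleton.mp hmem
      -- the image of I under φ is a nonzero submodule, hence ⊤
      set S : Submodule R N := Submodule.map φ (TwoSidedIdeal.asIdeal I) with hS
      have hSne : S ≠ ⊥ := by
        intro h
        have : φ (a * r) ∈ S := ⟨a * r, TwoSidedIdeal.mem_asIdeal.mpr (I.mul_mem_right a r haI), rfl⟩
        rw [h, Submodule.mem_bot] at this
        apply hm
        have : (a * r) • n = 0 := this
        rwa [mul_smul, hr] at this
      have hStop : S = ⊤ := (hsimp.1.2 S).resolve_left hSne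
      have : φ x ∈ S := hStop ▸ Submodule.mem_top
      obtain ⟨b, hbI, hb⟩ := this
      refine ⟨x - b, ?_, b, TwoSidedIdeal.mem_asIdeal.mp hbI, sub_add_cancel x b⟩
      rw [LinearMap.mem_ker, map_sub, hb, sub_self]
  · rintro ⟨M, hMne, hM⟩
    -- extend M to a maximal left ideal
    obtain ⟨M', hM'max, hMM'⟩ := Ideal.exists_le_maximal M hMne
    refine ⟨R ⧸ M', inferInstance, inferInstance, ?_, ?_⟩
    · rw [isSimpleModule_iff_isCoatom]
      exact Ideal.isMaximal_def.mp hM'max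
    · constructor
      intro a b hab
      by_contra hne
      have hc : a - b ≠ 0 := sub_ne_zero_of_ne hne
      -- the largest two-sided ideal inside M'
      set J : TwoSidedIdeal R := TwoSidedIdeal.mk' {y : R | ∀ r : R, y * r ∈ M'}
        (fun r => by simpa using M'.zero_mem)
        (fun hx hy r => by rw [add_mul]; exact M'.add_mem (hx r) (hy r))
        (fun hx r => by rw [neg_mul]; exact M'.neg_mem (hx r))
        (fun {x y} hy r => by rw [mul_assoc]; exact M'.smul_mem x (hy r))
        (fun {x y} hx r => by rw [mul_assoc]; exact hx (y * r)) with hJ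
      have hmemJ : ∀ z : R, z ∈ J ↔ ∀ r : R, z * r ∈ M' := fun z =>
        TwoSidedIdeal.mem_mk' _ _ _ _ _ _ z
      have hcJ : a - b ∈ J := by
        rw [hmemJ]
        intro r
        have := hab (Submodule.Quotient.mk r)
        have h2 : (a - b) • (Submodule.Quotient.mk r : R ⧸ M') = 0 := by
          rw [sub_smul, this, sub_self]
        rwa [← Submodule.Quotient.mk_smul, Submodule.Quotient.mk_eq_zero, smul_eq_mul] at h2
      have hJne : J ≠ ⊥ := by
        intro h
        rw [h, TwoSidedIdeal.mem_bot] at hcJ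
        exact hc hcJ
      obtain ⟨m, hmM, x, hxJ, hmx⟩ := hM J hJne 1
      have h1 : (1 : R) ∈ M' := by
        rw [← hmx]
        refine M'.add_mem (hMM' hmM) ?_
        have := (hmemJ x).mp hxJ 1
        rwa [mul_one] at this
      exact hM'max.ne_top (Ideal.eq_top_of_isUnit_mem M' h1 isUnit_one)
end

section
/- Let Λ be a row-finite locally convex k-graph, v ∈ Λ⁰, x ∈ vΛ^{≤∞}, and p ∈ ℕ^k with p∧d(x) = 0. Then for every z ∈ vΛ^{≤∞} one has p∧d(z) = 0 and (x; (0, p)) ∼ (z; (0, p)), i.e. [x; (0, p)] = [z; (0, p)]. -/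
open scoped ENat

open scoped Classical

namespace KGraphAux

open KGraph

variable {k : ℕ} {Λ : KGraph k}

lemma mor_congr (x : BPath Λ) {p q p' q' : Fin k → ℕ} (hp : p = p') (hq : q = q')
    (h : p ≤ q) (hb : ∀ i, ((q i : ℕ∞)) ≤ x.bdeg i)
    (h' : p' ≤ q') (hb' : ∀ i, ((q' i : ℕ∞)) ≤ x.bdeg i) :
    x.mor p q h hb = x.mor p' q' h' hb' := by
  subst hp; subst hq; rfl

lemma minDeg_zero (d : Fin k → ℕ∞) : minDeg 0 d = 0 := by
  funext i
  simp [minDeg]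

lemma h0 (x : BPath Λ) : ∀ i, (((0 : Fin k → ℕ) i : ℕ∞)) ≤ x.bdeg i := fun i => by simp

lemma rng_mor_zero (x : BPath Λ) (hb : ∀ i, (((0 : Fin k → ℕ) i : ℕ∞)) ≤ x.bdeg i) :
    Λ.rng (x.mor 0 0 le_rfl hb) = x.range := by
  unfold BPath.range BPath.vtx
  exact congrArg Λ.rng (mor_congr x (minDeg_zero x.bdeg).symm (minDeg_zero x.bdeg).symm _ _ _ _)

lemma seg_zero (x : BPath Λ) (p : Fin k → ℕ) (hp : minDeg p x.bdeg = 0)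
    (h : (0 : Fin k → ℕ) ≤ p) :
    x.seg 0 p h = Λ.id x.range := by
  unfold BPath.seg
  rw [mor_congr x (minDeg_zero x.bdeg) hp (minDeg_mono h x.bdeg)
    (fun i => minDeg_le_deg p x.bdeg i) le_rfl (h0 x)]
  rw [x.mor_self 0 (h0 x), rng_mor_zero x (h0 x)]

lemma bdeg_eq_zero (x z : BPath Λ) (hxz : z.range = x.range) (i : Fin k)
    (hxi : x.bdeg i = 0) : z.bdeg i = 0 := by
  by_contra hne
  have hb : ∀ j, ((unitVec i j : ℕ∞)) ≤ z.bdeg j := by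
    intro j
    unfold unitVec
    by_cases hj : j = i
    · subst hj; simp only [if_pos rfl, Nat.cast_one]
      exact ENat.one_le_iff_ne_zero.mpr hne
    · simp [hj]
  have hbound := x.boundary 0 (h0 x) i (by simp [hxi])
  apply hbound
  refine ⟨z.mor 0 (unitVec i) (fun j => Nat.zero_le _) hb, ?_, ?_⟩
  · rw [z.rng_mor 0 (unitVec i) _ hb (h0 z), rng_mor_zero z (h0 z), hxz,
      ← rng_mor_zero x (h0 x)]
  · rw [z.deg_mor]
    funext j; simp

end KGraphAux

/-- **Lemma 4.2 (Lemma 2.2 of Robertson–Sims).** Let `Λ` be a row-finite locally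
convex `k`-graph, `v ∈ Λ⁰`, `x ∈ vΛ^{≤∞}` and `p ∈ ℕᵏ` with `p ∧ d(x) = 0`.  Then
for any other `z ∈ vΛ^{≤∞}` we have `p ∧ d(z) = 0` and `[x; (0, p)] = [z; (0, p)]`. -/
theorem boundary_path_class_eq_of_min_deg_eq_zero
    {k : ℕ} (Λ : KGraph k) (hrf : Λ.RowFinite) (hlc : Λ.LocallyConvex)
    (v : Λ.Obj) (x : KGraph.BPath Λ) (hx : x.range = v) (p : Fin k → ℕ)
    (hp : KGraph.minDeg p x.bdeg = 0) :
    ∀ z : KGraph.BPath Λ, z.range = v →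
      KGraph.minDeg p z.bdeg = 0 ∧
      KGraph.pmk Λ x 0 p (fun i => Nat.zero_le _) =
        KGraph.pmk Λ z 0 p (fun i => Nat.zero_le _) := by
  intro z hz
  have hminz : KGraph.minDeg p z.bdeg = 0 := by
    funext i
    rcases Nat.eq_zero_or_pos (p i) with h | h
    · simp [KGraph.minDeg, h]
    · have hx0 : x.bdeg i = 0 := by
        have hci := congrFun hp i
        unfold KGraph.minDeg at hci
        rcases ENat.toNat_eq_zero.mp hci with h' | h'
        · by_contra hne
          have hone : (1 : ℕ∞) ≤ min ((p i : ℕ∞)) (x.bdeg i) :=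
            le_min (by exact_mod_cast h) (ENat.one_le_iff_ne_zero.mpr hne)
          rw [h'] at hone
          simp at hone
        · exact absurd h' (KGraph.minDeg_ne_top p x.bdeg i)
      have hz0 : z.bdeg i = 0 :=
        KGraphAux.bdeg_eq_zero x z (hz.trans hx.symm) i hx0
      simp [KGraph.minDeg, hz0]
  refine ⟨hminz, ?_⟩
  apply Quotient.sound
  show KGraph.pkey Λ _ = KGraph.pkey Λ _
  unfold KGraph.pkey
  refine Prod.ext ?_ (Prod.ext ?_ rfl)
  · show x.seg 0 p (fun i => Nat.zero_le _) = z.seg 0 p (fun i => Nat.zero_le _)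
    rw [KGraphAux.seg_zero x p hp _, KGraphAux.seg_zero z p hminz _, hx, hz]
  · funext i; simp
end

section
/- Let Λ be a row-finite locally convex k-graph and Λ̃ its desourcification. Then Λ⁰ satisfies Condition (MT3) if and only if Λ̃⁰ satisfies Condition (MT3). -/
open scoped ENat

open scoped Classical

namespace KGraph

variable {k : ℕ} {Λ : KGraph k}

/-- `v` receives an edge of color `i`. -/
def HasEdge (Λ : KGraph k) (v : Λ.Obj) (i : Fin k) : Prop :=
  ∃ e : Λ.Mor, Λ.rng e = v ∧ Λ.deg e = unitVec i

lemma comp_hcongr {f f' g : Λ.Mor} (hf : f = f') (h : Λ.src f = Λ.rng g)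
    (h' : Λ.src f' = Λ.rng g) : Λ.comp f g h = Λ.comp f' g h' := by subst hf; rfl

lemma fac_ex (f : Λ.Mor) (m n : Fin k → ℕ) (h : Λ.deg f = m + n) :
    ∃ a b : Λ.Mor, ∃ hab : Λ.src a = Λ.rng b,
      Λ.deg a = m ∧ Λ.deg b = n ∧ Λ.comp a b hab = f := by
  obtain ⟨⟨a, b⟩, ⟨hab, h1, h2, h3⟩, _⟩ := Λ.factorization f m n h
  exact ⟨a, b, hab, h1, h2, h3⟩

lemma fac_uniq {f a b a' b' : Λ.Mor} (hab : Λ.src a = Λ.rng b) (hab' : Λ.src a' = Λ.rng b')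
    (hc : Λ.comp a b hab = f) (hc' : Λ.comp a' b' hab' = f) (hd : Λ.deg a = Λ.deg a') :
    a = a' ∧ b = b' := by
  have hdf : Λ.deg f = Λ.deg a + Λ.deg b := by rw [← hc, Λ.deg_comp]
  obtain ⟨p, _, hu⟩ := Λ.factorization f (Λ.deg a) (Λ.deg b) hdf
  have hdb' : Λ.deg b' = Λ.deg b := by
    have h2 : Λ.deg a + Λ.deg b = Λ.deg a' + Λ.deg b' := by
      rw [← Λ.deg_comp a b hab, ← Λ.deg_comp a' b' hab', hc, hc']
    rw [← hd] at h2
    exact (add_left_cancel h2).symm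
  have h1 := hu (a, b) ⟨hab, rfl, rfl, hc⟩
  have h2 := hu (a', b') ⟨hab', hd.symm, hdb', hc'⟩
  have h3 : (a, b) = (a', b') := h1.trans h2.symm
  exact ⟨congrArg Prod.fst h3, congrArg Prod.snd h3⟩

lemma deg_zero_id {f : Λ.Mor} (h : Λ.deg f = 0) : f = Λ.id (Λ.rng f) := by
  have h1 : Λ.comp (Λ.id (Λ.rng f)) f (Λ.src_id (Λ.rng f)) = f := Λ.id_comp f
  have h2 : Λ.comp f (Λ.id (Λ.src f)) ((Λ.rng_id (Λ.src f)).symm) = f := Λ.comp_id f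
  have hd : Λ.deg (Λ.id (Λ.rng f)) = Λ.deg f := by rw [Λ.deg_id, h]
  exact ((fac_uniq _ _ h1 h2 hd).1).symm

/-- If `rng f` receives no `i`-edge, then `deg f i = 0`. -/
lemma deg_apply_zero {f : Λ.Mor} {i : Fin k} (hne : ¬ Λ.HasEdge (Λ.rng f) i) :
    Λ.deg f i = 0 := by
  by_contra hpos
  have hsplit : Λ.deg f = unitVec i + (Λ.deg f - unitVec i) := by
    funext j
    simp only [unitVec, Pi.add_apply, Pi.sub_apply]
    by_cases hj : j = i
    · subst hj; simp; omega
    · simp [hj]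
  obtain ⟨a, b, hab, ha, _, hc⟩ := fac_ex f (unitVec i) (Λ.deg f - unitVec i) hsplit
  exact hne ⟨a, by rw [← hc, Λ.rng_comp], ha⟩

/-- Local convexity propagates received edges along paths of `i`-degree zero. -/
lemma propagate (hlc : Λ.LocallyConvex) {i : Fin k} :
    ∀ (n : ℕ) (b : Λ.Mor), (∑ j, Λ.deg b j) = n → Λ.deg b i = 0 →
      Λ.HasEdge (Λ.rng b) i → Λ.HasEdge (Λ.src b) i := by
  intro n
  induction n with
  | zero =>
    intro b hsum _ he
    have hz : Λ.deg b = 0 := by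
      funext j
      exact (Finset.sum_eq_zero_iff.mp hsum) j (Finset.mem_univ j)
    have hb : b = Λ.id (Λ.rng b) := deg_zero_id hz
    have : Λ.src b = Λ.rng b := by rw [hb, Λ.src_id, Λ.rng_id]
    rwa [this]
  | succ n ih =>
    intro b hsum hzero he
    obtain ⟨j, _, hj⟩ : ∃ j ∈ Finset.univ, Λ.deg b j ≠ 0 :=
      Finset.exists_ne_zero_of_sum_ne_zero (by rw [hsum]; exact Nat.succ_ne_zero n)
    have hij : i ≠ j := by rintro rfl; exact hj hzero
    have hsplit : Λ.deg b = unitVec j + (Λ.deg b - unitVec j) := by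
      funext jj
      simp only [unitVec, Pi.add_apply, Pi.sub_apply]
      by_cases hjj : jj = j
      · subst hjj; simp; omega
      · simp [hjj]
    obtain ⟨μ, b', hab, hμ, hb', hc⟩ := fac_ex b (unitVec j) (Λ.deg b - unitVec j) hsplit
    obtain ⟨e, he1, he2⟩ := he
    have hrμ : Λ.rng μ = Λ.rng b := by rw [← hc, Λ.rng_comp]
    obtain ⟨_, g', hg'1, hg'2⟩ :=
      hlc (Λ.rng b) i j hij e μ he1 he2 hrμ hμ
    have hedge' : Λ.HasEdge (Λ.rng b') i := ⟨g', by rw [hg'1, ← hab], hg'2⟩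
    have hdegb : Λ.deg b = Λ.deg μ + Λ.deg b' := by rw [← hc, Λ.deg_comp]
    have hsum' : (∑ jj, Λ.deg b' jj) = n := by
      have h1 : (∑ jj, Λ.deg b jj) = (∑ jj, Λ.deg μ jj) + ∑ jj, Λ.deg b' jj := by
        rw [hdegb]; exact Finset.sum_add_distrib
    
      have h2 : (∑ jj, Λ.deg μ jj) = 1 := by
        rw [hμ]; simp [unitVec]
      omega
    have hz' : Λ.deg b' i = 0 := by
      have h := congrFun hdegb i
      simp only [Pi.add_apply] at h
      have hu : Λ.deg μ i = 0 := by rw [hμ]; simp only [unitVec]; exact if_neg hij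
      omega
    have := ih b' hsum' hz' hedge'
    rwa [← hc, Λ.src_comp]

/-- Every vertex has a maximal extension of degree at most `(1,…,1)`. -/
lemma exists_max_ext (Λ : KGraph k) (u : Λ.Obj) :
    ∃ h : Λ.Mor, Λ.rng h = u ∧
      ∀ i : Fin k, Λ.deg h i = 0 → ¬ Λ.HasEdge (Λ.src h) i := by
  classical
  set P : ℕ → Prop := fun s => ∃ h : Λ.Mor, Λ.rng h = u ∧ (∀ j, Λ.deg h j ≤ 1) ∧
    (∑ j, Λ.deg h j) = s with hP
  have hP0 : P 0 := ⟨Λ.id u, Λ.rng_id u, by simp [Λ.deg_id], by simp [Λ.deg_id]⟩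
  obtain ⟨h, hrng, hle, hsum⟩ := Nat.findGreatest_spec (Nat.zero_le k) hP0
  refine ⟨h, hrng, ?_⟩
  rintro i hi ⟨e, he1, he2⟩
  have hcomp : Λ.src h = Λ.rng e := he1.symm
  set h' := Λ.comp h e hcomp with hh'
  have hd : Λ.deg h' = Λ.deg h + unitVec i := by rw [hh', Λ.deg_comp, he2]
  have hle' : ∀ j, Λ.deg h' j ≤ 1 := by
    intro j
    have := congrFun hd j
    simp only [Pi.add_apply, unitVec] at this
    by_cases hj : j = i
    · subst hj; simp at this; omega
    · rw [if_neg hj] at this; have := hle j; omega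
  have hsum' : (∑ j, Λ.deg h' j) = Nat.findGreatest P k + 1 := by
    have h1 : (∑ j, Λ.deg h' j) = (∑ j, Λ.deg h j) + ∑ j, unitVec i j := by
      rw [hd]; exact Finset.sum_add_distrib
    have h2 : (∑ j, unitVec i j) = 1 := by simp [unitVec]
    omega
  have hlek : Nat.findGreatest P k + 1 ≤ k := by
    calc Nat.findGreatest P k + 1 = ∑ j, Λ.deg h' j := hsum'.symm
      _ ≤ ∑ _j : Fin k, 1 := Finset.sum_le_sum (fun j _ => hle' j)
      _ = k := by simp
  exact Nat.findGreatest_is_greatest (lt_add_one _) hlek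
    ⟨h', by rw [hh', Λ.rng_comp]; exact hrng, hle', hsum'⟩

/-- A choice of maximal extension. -/
noncomputable def step (Λ : KGraph k) (u : Λ.Obj) : Λ.Mor :=
  (Λ.exists_max_ext u).choose

lemma step_rng (Λ : KGraph k) (u : Λ.Obj) : Λ.rng (Λ.step u) = u :=
  (Λ.exists_max_ext u).choose_spec.1

lemma step_max (Λ : KGraph k) (u : Λ.Obj) {i : Fin k} (h : Λ.deg (Λ.step u) i = 0) :
    ¬ Λ.HasEdge (Λ.src (Λ.step u)) i :=
  (Λ.exists_max_ext u).choose_spec.2 i h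

/-- The greedy chain extending a morphism `l`. -/
noncomputable def chain (Λ : KGraph k) (l : Λ.Mor) : ℕ → Λ.Mor :=
  fun t => Nat.rec l
    (fun _ g => Λ.comp g (Λ.step (Λ.src g)) (Λ.step_rng (Λ.src g)).symm) t

lemma chain_zero (Λ : KGraph k) (l : Λ.Mor) : Λ.chain l 0 = l := rfl

lemma chain_succ (Λ : KGraph k) (l : Λ.Mor) (t : ℕ) :
    Λ.chain l (t + 1) = Λ.comp (Λ.chain l t) (Λ.step (Λ.src (Λ.chain l t)))
      (Λ.step_rng (Λ.src (Λ.chain l t))).symm := rfl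

lemma chain_rng (Λ : KGraph k) (l : Λ.Mor) (t : ℕ) : Λ.rng (Λ.chain l t) = Λ.rng l := by
  induction t with
  | zero => rfl
  | succ t ih => rw [chain_succ, Λ.rng_comp]; exact ih

lemma chain_deg_mono (Λ : KGraph k) (l : Λ.Mor) :
    Monotone (fun t => Λ.deg (Λ.chain l t)) := by
  apply monotone_nat_of_le_succ
  intro t
  rw [chain_succ, Λ.deg_comp]
  exact le_add_of_nonneg_right (by intro i; exact Nat.zero_le _)

lemma init_lift (l f : Λ.Mor) {t t' : ℕ} (htt : t ≤ t')
    (hb : ∃ b hb, Λ.comp f b hb = Λ.chain l t) :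
    ∃ b hb, Λ.comp f b hb = Λ.chain l t' := by
  induction t', htt using Nat.le_induction with
  | base => exact hb
  | succ t' _ ih =>
    obtain ⟨b, hbb, heq⟩ := ih
    set s := Λ.step (Λ.src (Λ.chain l t')) with hs
    have hgh : Λ.src b = Λ.rng s := by
      rw [hs, Λ.step_rng, ← heq, Λ.src_comp]
    refine ⟨Λ.comp b s hgh, hbb.trans (Λ.rng_comp b s hgh).symm, ?_⟩
    rw [← Λ.comp_assoc f b s hbb hgh, chain_succ]
    exact comp_hcongr heq _ _

/-- `f` is the initial segment of the chain path of degree `n`. -/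
def IsInit (Λ : KGraph k) (l : Λ.Mor) (n : Fin k → ℕ) (f : Λ.Mor) : Prop :=
  Λ.deg f = n ∧ ∃ t b hb, Λ.comp f b hb = Λ.chain l t

lemma init_unique {l : Λ.Mor} {n : Fin k → ℕ} {f f' : Λ.Mor}
    (h : Λ.IsInit l n f) (h' : Λ.IsInit l n f') : f = f' := by
  obtain ⟨hd, t, b, hb, heq⟩ := h
  obtain ⟨hd', t', b', hb', heq'⟩ := h'
  obtain ⟨c, hc, heqc⟩ := init_lift l f (le_max_left t t') ⟨b, hb, heq⟩
  obtain ⟨c', hc', heqc'⟩ := init_lift l f' (le_max_right t t') ⟨b', hb', heq'⟩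
  exact (fac_uniq hc hc' heqc heqc' (hd.trans hd'.symm)).1

lemma init_exists {l : Λ.Mor} {n : Fin k → ℕ} {t : ℕ} (h : n ≤ Λ.deg (Λ.chain l t)) :
    ∃ f, Λ.IsInit l n f := by
  have hsplit : Λ.deg (Λ.chain l t) = n + (Λ.deg (Λ.chain l t) - n) := by
    funext i
    have h2 : n i ≤ Λ.deg (Λ.chain l t) i := h i
    simp only [Pi.add_apply, Pi.sub_apply]
    omega
  obtain ⟨a, b, hab, ha, _, hc⟩ := fac_ex (Λ.chain l t) n (Λ.deg (Λ.chain l t) - n) hsplit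
  exact ⟨a, ha, t, b, hab, hc⟩

/-- The degree of the limit boundary path of the chain. -/
noncomputable def bdegC (Λ : KGraph k) (l : Λ.Mor) : Fin k → ℕ∞ :=
  fun i => ⨆ t, (Λ.deg (Λ.chain l t) i : ℕ∞)

lemma le_bdegC (Λ : KGraph k) (l : Λ.Mor) (t : ℕ) (i : Fin k) :
    (Λ.deg (Λ.chain l t) i : ℕ∞) ≤ Λ.bdegC l i :=
  le_iSup (fun t => (Λ.deg (Λ.chain l t) i : ℕ∞)) t

lemma exists_chain_ge {l : Λ.Mor} {q : Fin k → ℕ}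
    (hq : ∀ i, ((q i : ℕ∞)) ≤ Λ.bdegC l i) : ∃ t, q ≤ Λ.deg (Λ.chain l t) := by
  have hi : ∀ i, ∃ t, q i ≤ Λ.deg (Λ.chain l t) i := by
    intro i
    by_contra hc
    push_neg at hc
    have hqpos : 1 ≤ q i := by have := hc 0; omega
    have hsup : Λ.bdegC l i ≤ ((q i - 1 : ℕ) : ℕ∞) := by
      apply iSup_le
      intro t
      exact_mod_cast Nat.le_sub_one_of_lt (hc t)
    have := (hq i).trans hsup
    have hle : q i ≤ q i - 1 := by exact_mod_cast this
    omega
  choose T hT using hi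
  refine ⟨Finset.univ.sup T, fun i => (hT i).trans ?_⟩
  exact Λ.chain_deg_mono l (Finset.le_sup (Finset.mem_univ i)) i

lemma init_ex {l : Λ.Mor} {n : Fin k → ℕ}
    (hn : ∀ i, ((n i : ℕ∞)) ≤ Λ.bdegC l i) : ∃ f, Λ.IsInit l n f := by
  obtain ⟨t, ht⟩ := exists_chain_ge hn
  exact init_exists ht

/-- The initial segment of the chain limit path of degree `n`. -/
noncomputable def seg0 (Λ : KGraph k) (l : Λ.Mor) (n : Fin k → ℕ) : Λ.Mor := by
  classical
  exact if h : ∃ f, Λ.IsInit l n f then h.choose else l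

lemma seg0_spec {l : Λ.Mor} {n : Fin k → ℕ} (h : ∃ f, Λ.IsInit l n f) :
    Λ.IsInit l n (Λ.seg0 l n) := by
  rw [seg0, dif_pos h]
  exact h.choose_spec

lemma seg0_eq {l : Λ.Mor} {n : Fin k → ℕ} {f : Λ.Mor} (hf : Λ.IsInit l n f) :
    Λ.seg0 l n = f := init_unique (seg0_spec ⟨f, hf⟩) hf

lemma seg0_l (Λ : KGraph k) (l : Λ.Mor) : Λ.seg0 l (Λ.deg l) = l :=
  seg0_eq ⟨rfl, 0, Λ.id (Λ.src l), (Λ.rng_id (Λ.src l)).symm, Λ.comp_id l⟩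

/-- Specification of the rectangle morphisms of the limit path. -/
def MorSpec (Λ : KGraph k) (l : Λ.Mor) (p q : Fin k → ℕ) (m : Λ.Mor) : Prop :=
  ∃ hh : Λ.src (Λ.seg0 l p) = Λ.rng m,
    Λ.deg m = q - p ∧ Λ.comp (Λ.seg0 l p) m hh = Λ.seg0 l q

lemma morSpec_exu {l : Λ.Mor} {p q : Fin k → ℕ} (hpq : p ≤ q)
    (hq : ∀ i, ((q i : ℕ∞)) ≤ Λ.bdegC l i) : ∃! m, Λ.MorSpec l p q m := by
  have hp : ∀ i, ((p i : ℕ∞)) ≤ Λ.bdegC l i :=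
    fun i => le_trans (by exact_mod_cast hpq i) (hq i)
  obtain ⟨hdq, t, bq, hbq, heqq⟩ := seg0_spec (init_ex hq)
  have hsplit : Λ.deg (Λ.seg0 l q) = p + (q - p) := by
    rw [hdq]; funext i
    have h2 : p i ≤ q i := hpq i
    simp only [Pi.add_apply, Pi.sub_apply]
    omega
  obtain ⟨a, b, hab, ha, hb, hc⟩ := fac_ex (Λ.seg0 l q) p (q - p) hsplit
  have hbq' : Λ.src b = Λ.rng bq := by
    rw [← hc, Λ.src_comp] at hbq; exact hbq
  have hainit : Λ.IsInit l p a := by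
    refine ⟨ha, t, Λ.comp b bq hbq', hab.trans (Λ.rng_comp b bq hbq').symm, ?_⟩
    rw [← Λ.comp_assoc a b bq hab hbq', ← heqq]
    exact comp_hcongr hc _ _
  have hseg : Λ.seg0 l p = a := seg0_eq hainit
  refine ⟨b, ⟨hseg ▸ hab, hb, ?_⟩, ?_⟩
  · exact (comp_hcongr hseg _ hab).trans hc
  · rintro m ⟨hh, hm1, hm2⟩
    exact (fac_uniq hh (hseg ▸ hab) hm2 ((comp_hcongr hseg _ hab).trans hc) rfl).2

/-- The rectangle morphisms of the limit path. -/
noncomputable def morC (Λ : KGraph k) (l : Λ.Mor) (p q : Fin k → ℕ) : Λ.Mor := by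
  classical
  exact if h : ∃ m, Λ.MorSpec l p q m then h.choose else l

lemma morC_spec {l : Λ.Mor} {p q : Fin k → ℕ} (hpq : p ≤ q)
    (hq : ∀ i, ((q i : ℕ∞)) ≤ Λ.bdegC l i) : Λ.MorSpec l p q (Λ.morC l p q) := by
  rw [morC, dif_pos (morSpec_exu hpq hq).exists]
  exact (morSpec_exu hpq hq).exists.choose_spec

lemma morC_eq {l : Λ.Mor} {p q : Fin k → ℕ} (hpq : p ≤ q)
    (hq : ∀ i, ((q i : ℕ∞)) ≤ Λ.bdegC l i) {m : Λ.Mor} (hm : Λ.MorSpec l p q m) :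
    Λ.morC l p q = m :=
  ((morSpec_exu hpq hq).unique (morC_spec hpq hq) hm)

lemma propagate' (hlc : Λ.LocallyConvex) {b : Λ.Mor} {i : Fin k}
    (h0 : Λ.deg b i = 0) (he : Λ.HasEdge (Λ.rng b) i) : Λ.HasEdge (Λ.src b) i :=
  propagate hlc (∑ j, Λ.deg b j) b rfl h0 he

lemma chain_init (Λ : KGraph k) (l : Λ.Mor) (t : ℕ) :
    ∃ b hb, Λ.comp l b hb = Λ.chain l t :=
  init_lift l l (Nat.zero_le t) ⟨Λ.id (Λ.src l), (Λ.rng_id (Λ.src l)).symm, Λ.comp_id l⟩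

lemma degl_le_bdegC (Λ : KGraph k) (l : Λ.Mor) (i : Fin k) :
    ((Λ.deg l i : ℕ∞)) ≤ Λ.bdegC l i :=
  Λ.le_bdegC l 0 i

lemma bdegC_eq_of_no_edge {l : Λ.Mor} {i : Fin k} (hne : ¬ Λ.HasEdge (Λ.src l) i) :
    Λ.bdegC l i = (Λ.deg l i : ℕ∞) := by
  refine le_antisymm (iSup_le fun t => ?_) (Λ.degl_le_bdegC l i)
  obtain ⟨b, hb, heq⟩ := Λ.chain_init l t
  have hd : Λ.deg (Λ.chain l t) = Λ.deg l + Λ.deg b := by rw [← heq, Λ.deg_comp]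
  have hbz : Λ.deg b i = 0 := by
    apply deg_apply_zero
    rw [← hb]; exact hne
  have : Λ.deg (Λ.chain l t) i = Λ.deg l i := by
    have := congrFun hd i; simp only [Pi.add_apply] at this; omega
  rw [this]

/-- The boundary path extending `l` obtained from the greedy chain. -/
noncomputable def bpathOf (Λ : KGraph k) (hlc : Λ.LocallyConvex) (l : Λ.Mor) :
    BPath Λ where
  bdeg := Λ.bdegC l
  mor p q _ _ := Λ.morC l p q
  deg_mor p q hpq hq := by
    obtain ⟨hh, h1, h2⟩ := morC_spec hpq hq
    exact h1
  mor_self p hp := by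
    obtain ⟨hh, h1, h2⟩ := morC_spec le_rfl hp
    apply deg_zero_id
    rw [h1]; funext i; simp
  src_mor p q hpq hq := by
    obtain ⟨hh, h1, h2⟩ := morC_spec hpq hq
    obtain ⟨hh', h1', h2'⟩ := morC_spec le_rfl hq
    exact ((Λ.src_comp _ _ hh).symm.trans (congrArg Λ.src h2)).trans hh'
  rng_mor p q hpq hq hp := by
    obtain ⟨hh, h1, h2⟩ := morC_spec hpq hq
    obtain ⟨hh', h1', h2'⟩ := morC_spec le_rfl hp
    exact hh.symm.trans hh'
  comp_mor p q r hpq hqr hr hq := by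
    obtain ⟨hh, h1, h2⟩ := morC_spec hpq hq
    obtain ⟨hh', h1', h2'⟩ := morC_spec hqr hr
    symm
    apply morC_eq (hpq.trans hqr) hr
    refine ⟨hh.trans (Λ.rng_comp _ _ _).symm, ?_, ?_⟩
    · rw [Λ.deg_comp, h1, h1']
      funext i
      have hx : p i ≤ q i := hpq i
      have hy : q i ≤ r i := hqr i
      simp only [Pi.add_apply, Pi.sub_apply]
      omega
    · rw [← Λ.comp_assoc (Λ.seg0 l p) (Λ.morC l p q) (Λ.morC l q r) hh _]
      exact (comp_hcongr h2 _ _).trans h2'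
  boundary p hp i hpi := by
    rintro ⟨e, he, hei⟩
    obtain ⟨hh, h1, h2⟩ := morC_spec (le_refl p) hp
    have hedge0 : Λ.HasEdge (Λ.src (Λ.seg0 l p)) i := ⟨e, he.trans hh.symm, hei⟩
    obtain ⟨t₀, ht₀⟩ := exists_chain_ge hp
    obtain ⟨hdp, t, b, hb, heq⟩ := seg0_spec (init_ex hp)
    obtain ⟨b', hb', heq'⟩ := init_lift l (Λ.seg0 l p) (le_max_left t t₀) ⟨b, hb, heq⟩
    set t' := max t t₀ with ht'
    have hDle : ∀ s : ℕ, Λ.deg (Λ.chain l s) i ≤ p i := by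
      intro s
      have := (Λ.le_bdegC l s i).trans hpi.symm.le
      exact_mod_cast this
    have hDi : Λ.deg (Λ.chain l t') i = p i := by
      have h1 := hDle t'
      have h2 : p i ≤ Λ.deg (Λ.chain l t') i :=
        (ht₀ i).trans (Λ.chain_deg_mono l (le_max_right t t₀) i)
      omega
    have hdsplit : Λ.deg (Λ.chain l t') = p + Λ.deg b' := by
      rw [← heq', Λ.deg_comp, hdp]
    have hbz : Λ.deg b' i = 0 := by
      have := congrFun hdsplit i; simp only [Pi.add_apply] at this; omega
    have hedge1 : Λ.HasEdge (Λ.src b') i := by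
      apply propagate' hlc hbz
      rw [← hb']; exact hedge0
    have hsrc : Λ.src (Λ.chain l t') = Λ.src b' := by
      rw [← heq', Λ.src_comp]
    set s := Λ.step (Λ.src (Λ.chain l t')) with hsdef
    have hsz : Λ.deg s i = 0 := by
      have h3 : Λ.deg (Λ.chain l (t' + 1)) i ≤ p i := hDle (t' + 1)
      have h4 : Λ.deg (Λ.chain l (t' + 1)) = Λ.deg (Λ.chain l t') + Λ.deg s := by
        rw [chain_succ, Λ.deg_comp]
      have := congrFun h4 i; simp only [Pi.add_apply] at this; omega
    have hedge2 : Λ.HasEdge (Λ.src s) i := by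
      apply propagate' hlc hsz
      rw [hsdef, Λ.step_rng, hsrc]; exact hedge1
    exact Λ.step_max _ hsz hedge2

lemma vtx_eq_rng (x : BPath Λ) {m p : Fin k → ℕ} (h : minDeg m x.bdeg = p)
    (hp : ∀ i, ((p i : ℕ∞)) ≤ x.bdeg i) :
    x.vtx m = Λ.rng (x.mor p p le_rfl hp) := by subst h; rfl

lemma seg0_zero (Λ : KGraph k) (l : Λ.Mor) : Λ.seg0 l 0 = Λ.id (Λ.rng l) := by
  apply seg0_eq
  refine ⟨Λ.deg_id _, 0, l, Λ.src_id (Λ.rng l), Λ.id_comp l⟩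

lemma rng_morC_self {l : Λ.Mor} {p : Fin k → ℕ}
    (hp : ∀ i, ((p i : ℕ∞)) ≤ Λ.bdegC l i) :
    Λ.rng (Λ.morC l p p) = Λ.src (Λ.seg0 l p) := by
  obtain ⟨hh, h1, h2⟩ := morC_spec le_rfl hp
  exact hh.symm

lemma minDeg_zero {d : Fin k → ℕ∞} : minDeg (0 : Fin k → ℕ) d = 0 := by
  funext i
  simp [minDeg]

/-- The range of `bpathOf l` is `rng l`. -/
lemma bpathOf_vtx_zero (hlc : Λ.LocallyConvex) (l : Λ.Mor) :
    (Λ.bpathOf hlc l).vtx 0 = Λ.rng l := by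
  rw [vtx_eq_rng _ minDeg_zero (fun i => by
    simp only [Pi.zero_apply, Nat.cast_zero]; exact zero_le)]
  show Λ.rng (Λ.morC l 0 0) = Λ.rng l
  rw [rng_morC_self (fun i => by
    simp only [Pi.zero_apply, Nat.cast_zero]; exact zero_le), seg0_zero, Λ.src_id]

/-- The vertex of `bpathOf l` at `deg l` is `src l`. -/
lemma bpathOf_rng_mor_degl (hlc : Λ.LocallyConvex) (l : Λ.Mor)
    (hp : ∀ i, ((Λ.deg l i : ℕ∞)) ≤ (Λ.bpathOf hlc l).bdeg i) :
    Λ.rng ((Λ.bpathOf hlc l).mor (Λ.deg l) (Λ.deg l) le_rfl hp) = Λ.src l := by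
  show Λ.rng (Λ.morC l (Λ.deg l) (Λ.deg l)) = Λ.src l
  rw [rng_morC_self hp, seg0_l]

lemma minDeg_apply_lt {m : Fin k → ℕ} {d : Fin k → ℕ∞} {i : Fin k}
    (h : minDeg m d i < m i) : ((minDeg m d i : ℕ∞)) = d i := by
  have hmin : ((minDeg m d i : ℕ∞)) = min ((m i : ℕ∞)) (d i) :=
    ENat.coe_toNat (minDeg_ne_top m d i)
  rcases le_total ((m i : ℕ∞)) (d i) with hle | hle
  · exfalso
    rw [min_eq_left hle] at hmin
    have : minDeg m d i = m i := by exact_mod_cast hmin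
    omega
  · rw [min_eq_right hle] at hmin
    exact hmin

lemma vtx_no_edge (x : BPath Λ) {m : Fin k → ℕ} {i : Fin k}
    (h : ((minDeg m x.bdeg i : ℕ∞)) = x.bdeg i) : ¬ Λ.HasEdge (x.vtx m) i :=
  x.boundary (minDeg m x.bdeg) (fun j => minDeg_le_deg m x.bdeg j) i h

lemma rng_seg (x : BPath Λ) (m n : Fin k → ℕ) (h : m ≤ n) :
    Λ.rng (x.seg m n h) = x.vtx m :=
  x.rng_mor _ _ (minDeg_mono h x.bdeg) _ (fun i => minDeg_le_deg m x.bdeg i)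

lemma src_seg (x : BPath Λ) (m n : Fin k → ℕ) (h : m ≤ n) :
    Λ.src (x.seg m n h) = x.vtx n :=
  x.src_mor _ _ (minDeg_mono h x.bdeg) _

lemma vmk_sound {x y : BPath Λ} {m n : Fin k → ℕ}
    (h : Λ.vkey (x, m) = Λ.vkey (y, n)) : vmk Λ x m = vmk Λ y n :=
  Quotient.sound h

lemma vmk_exact {x y : BPath Λ} {m n : Fin k → ℕ}
    (h : vmk Λ x m = vmk Λ y n) : Λ.vkey (x, m) = Λ.vkey (y, n) :=
  Quotient.exact h

end KGraph


open KGraph in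
/-- **Lemma 4.3 (2).** Let `Λ` be a row-finite locally convex `k`-graph and `Λ̃` its
desourcification.  Then `Λ⁰` satisfies Condition (MT3) iff `Λ̃⁰` does. -/
theorem desourcification_MT3_iff
    {k : ℕ} (Λ Λt : KGraph k) (hrf : Λ.RowFinite) (hlc : Λ.LocallyConvex)
    (D : KGraph.Desourcification Λ Λt) :
    Λ.MT3 ↔ Λt.MT3 := by
  constructor
  · -- forward direction
    intro hM u₁ u₂
    obtain ⟨⟨x₁, m₁⟩, hx₁⟩ := Quotient.exists_rep (D.eObj.symm u₁)
    obtain ⟨⟨x₂, m₂⟩, hx₂⟩ := Quotient.exists_rep (D.eObj.symm u₂)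
    have hu₁ : u₁ = D.eObj (vmk Λ x₁ m₁) := by
      rw [show vmk Λ x₁ m₁ = D.eObj.symm u₁ from hx₁, Equiv.apply_symm_apply]
    have hu₂ : u₂ = D.eObj (vmk Λ x₂ m₂) := by
      rw [show vmk Λ x₂ m₂ = D.eObj.symm u₂ from hx₂, Equiv.apply_symm_apply]
    set v₁ := x₁.vtx m₁ with hv₁
    set v₂ := x₂.vtx m₂ with hv₂
    set c₁ : Fin k → ℕ := fun i => m₁ i - minDeg m₁ x₁.bdeg i with hc₁
    set c₂ : Fin k → ℕ := fun i => m₂ i - minDeg m₂ x₂.bdeg i with hc₂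
    -- no edges at `v j` in the support of `c j`
    have hminle₁ : ∀ i, minDeg m₁ x₁.bdeg i ≤ m₁ i := by
      intro i
      have h := ENat.toNat_le_toNat (min_le_left ((m₁ i : ℕ∞)) (x₁.bdeg i))
        (ENat.coe_ne_top (m₁ i))
      simpa [minDeg] using h
    have hminle₂ : ∀ i, minDeg m₂ x₂.bdeg i ≤ m₂ i := by
      intro i
      have h := ENat.toNat_le_toNat (min_le_left ((m₂ i : ℕ∞)) (x₂.bdeg i))
        (ENat.coe_ne_top (m₂ i))
      simpa [minDeg] using h
    have hne₁ : ∀ i, c₁ i ≠ 0 → ¬ Λ.HasEdge v₁ i := by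
      intro i hi
      apply vtx_no_edge
      apply minDeg_apply_lt
      have := hminle₁ i
      simp only [hc₁] at hi
      omega
    have hne₂ : ∀ i, c₂ i ≠ 0 → ¬ Λ.HasEdge v₂ i := by
      intro i hi
      apply vtx_no_edge
      apply minDeg_apply_lt
      have := hminle₂ i
      simp only [hc₂] at hi
      omega
    obtain ⟨w, ⟨l₁, hl₁r, hl₁s⟩, ⟨l₂, hl₂r, hl₂s⟩⟩ := hM v₁ v₂
    have hdl₁ : ∀ i, c₁ i ≠ 0 → Λ.deg l₁ i = 0 := fun i hi =>
      deg_apply_zero (by rw [hl₁r]; exact hne₁ i hi)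
    have hdl₂ : ∀ i, c₂ i ≠ 0 → Λ.deg l₂ i = 0 := fun i hi =>
      deg_apply_zero (by rw [hl₂r]; exact hne₂ i hi)
    have hnew : ∀ i, (c₁ i ≠ 0 ∨ c₂ i ≠ 0) → ¬ Λ.HasEdge w i := by
      rintro i hi ⟨e, he, hde⟩
      rcases hi with hi | hi
      · have h1 : Λ.src l₁ = Λ.rng e := hl₁s.trans he.symm
        have hz : Λ.deg (Λ.comp l₁ e h1) i = 0 :=
          deg_apply_zero (by rw [Λ.rng_comp, hl₁r]; exact hne₁ i hi)
        rw [Λ.deg_comp] at hz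
        simp [Pi.add_apply, hde, unitVec] at hz
      · have h1 : Λ.src l₂ = Λ.rng e := hl₂s.trans he.symm
        have hz : Λ.deg (Λ.comp l₂ e h1) i = 0 :=
          deg_apply_zero (by rw [Λ.rng_comp, hl₂r]; exact hne₂ i hi)
        rw [Λ.deg_comp] at hz
        simp [Pi.add_apply, hde, unitVec] at hz
    set y₁ := Λ.bpathOf hlc l₁ with hy₁
    set y₂ := Λ.bpathOf hlc l₂ with hy₂
    set c : Fin k → ℕ := fun i => max (c₁ i) (c₂ i) with hc
    set q₁' : Fin k → ℕ := fun i => c i + Λ.deg l₁ i with hqd₁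
    set q₂' : Fin k → ℕ := fun i => c i + Λ.deg l₂ i with hqd₂
    have hB₁ : ∀ i, (c₁ i ≠ 0 ∨ c₂ i ≠ 0) → y₁.bdeg i = ((Λ.deg l₁ i : ℕ∞)) :=
      fun i hi => bdegC_eq_of_no_edge (by rw [hl₁s]; exact hnew i hi)
    have hB₂ : ∀ i, (c₁ i ≠ 0 ∨ c₂ i ≠ 0) → y₂.bdeg i = ((Λ.deg l₂ i : ℕ∞)) :=
      fun i hi => bdegC_eq_of_no_edge (by rw [hl₂s]; exact hnew i hi)
    have hBge₁ : ∀ i, ((Λ.deg l₁ i : ℕ∞)) ≤ y₁.bdeg i := fun i => Λ.degl_le_bdegC l₁ i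
    have hBge₂ : ∀ i, ((Λ.deg l₂ i : ℕ∞)) ≤ y₂.bdeg i := fun i => Λ.degl_le_bdegC l₂ i
    have hmdq₁ : minDeg q₁' y₁.bdeg = Λ.deg l₁ := by
      funext i
      by_cases hi : c₁ i ≠ 0 ∨ c₂ i ≠ 0
      · simp only [minDeg, hB₁ i hi, hqd₁]
        rw [min_eq_right (by exact_mod_cast Nat.le_add_left (Λ.deg l₁ i) (c i)),
          ENat.toNat_coe]
      · push_neg at hi
        have hci : c i = 0 := by simp [hc, hi.1, hi.2]
        have hq : q₁' i = Λ.deg l₁ i := by simp [hqd₁, hci]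
        simp only [minDeg, hq]
        rw [min_eq_left (hBge₁ i), ENat.toNat_coe]
    have hmdq₂ : minDeg q₂' y₂.bdeg = Λ.deg l₂ := by
      funext i
      by_cases hi : c₁ i ≠ 0 ∨ c₂ i ≠ 0
      · simp only [minDeg, hB₂ i hi, hqd₂]
        rw [min_eq_right (by exact_mod_cast Nat.le_add_left (Λ.deg l₂ i) (c i)),
          ENat.toNat_coe]
      · push_neg at hi
        have hci : c i = 0 := by simp [hc, hi.1, hi.2]
        have hq : q₂' i = Λ.deg l₂ i := by simp [hqd₂, hci]
        simp only [minDeg, hq]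
        rw [min_eq_left (hBge₂ i), ENat.toNat_coe]
    have hmdc₁ : minDeg c₁ y₁.bdeg = 0 := by
      funext i
      by_cases hi : c₁ i ≠ 0
      · have hb : y₁.bdeg i = ((Λ.deg l₁ i : ℕ∞)) := hB₁ i (Or.inl hi)
        have hd0 : Λ.deg l₁ i = 0 := hdl₁ i hi
        simp only [minDeg, hb, hd0]
        simp
      · push_neg at hi
        simp only [minDeg, hi]
        simp
    have hmdc₂ : minDeg c₂ y₂.bdeg = 0 := by
      funext i
      by_cases hi : c₂ i ≠ 0
      · have hb : y₂.bdeg i = ((Λ.deg l₂ i : ℕ∞)) := hB₂ i (Or.inr hi)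
        have hd0 : Λ.deg l₂ i = 0 := hdl₂ i hi
        simp only [minDeg, hb, hd0]
        simp
      · push_neg at hi
        simp only [minDeg, hi]
        simp
    have hzero₁ : ∀ i, (((0 : Fin k → ℕ) i : ℕ∞)) ≤ y₁.bdeg i := fun i => by
      simp only [Pi.zero_apply, Nat.cast_zero]; exact zero_le
    have hzero₂ : ∀ i, (((0 : Fin k → ℕ) i : ℕ∞)) ≤ y₂.bdeg i := fun i => by
      simp only [Pi.zero_apply, Nat.cast_zero]; exact zero_le
    have hvc₁ : y₁.vtx c₁ = v₁ := by
      rw [vtx_eq_rng y₁ hmdc₁ hzero₁, ← vtx_eq_rng y₁ minDeg_zero hzero₁, hy₁,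
        bpathOf_vtx_zero, hl₁r]
    have hvc₂ : y₂.vtx c₂ = v₂ := by
      rw [vtx_eq_rng y₂ hmdc₂ hzero₂, ← vtx_eq_rng y₂ minDeg_zero hzero₂, hy₂,
        bpathOf_vtx_zero, hl₂r]
    have hvq₁ : y₁.vtx q₁' = w := by
      rw [vtx_eq_rng y₁ hmdq₁ hBge₁]
      exact (bpathOf_rng_mor_degl hlc l₁ (fun i => hBge₁ i)).trans hl₁s
    have hvq₂ : y₂.vtx q₂' = w := by
      rw [vtx_eq_rng y₂ hmdq₂ hBge₂]
      exact (bpathOf_rng_mor_degl hlc l₂ (fun i => hBge₂ i)).trans hl₂s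
    have hkey₁ : Λ.vkey (y₁, c₁) = Λ.vkey (x₁, m₁) := by
      show (y₁.vtx c₁, fun i => c₁ i - minDeg c₁ y₁.bdeg i) = (v₁, c₁)
      rw [hvc₁]
      congr 1
      funext i
      rw [hmdc₁]
      simp
    have hkey₂ : Λ.vkey (y₂, c₂) = Λ.vkey (x₂, m₂) := by
      show (y₂.vtx c₂, fun i => c₂ i - minDeg c₂ y₂.bdeg i) = (v₂, c₂)
      rw [hvc₂]
      congr 1
      funext i
      rw [hmdc₂]
      simp
    have hkeyq : Λ.vkey (y₁, q₁') = Λ.vkey (y₂, q₂') := by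
      show (y₁.vtx q₁', fun i => q₁' i - minDeg q₁' y₁.bdeg i) =
        (y₂.vtx q₂', fun i => q₂' i - minDeg q₂' y₂.bdeg i)
      rw [hvq₁, hvq₂]
      congr 1
      funext i
      rw [hmdq₁, hmdq₂]
      simp [hqd₁, hqd₂]
    have hle₁ : c₁ ≤ q₁' := by
      intro i
      exact le_trans (le_max_left _ _) (Nat.le_add_right _ _)
    have hle₂ : c₂ ≤ q₂' := by
      intro i
      exact le_trans (le_max_right _ _) (Nat.le_add_right _ _)
    refine ⟨D.eObj (vmk Λ y₁ q₁'), ⟨D.eMor (pmk Λ y₁ c₁ q₁' hle₁), ?_, ?_⟩,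
      ⟨D.eMor (pmk Λ y₂ c₂ q₂' hle₂), ?_, ?_⟩⟩
    · rw [D.rng_eq, hu₁, vmk_sound hkey₁]
    · exact D.src_eq y₁ c₁ q₁' hle₁
    · rw [D.rng_eq, hu₂, vmk_sound hkey₂]
    · rw [D.src_eq]
      exact congrArg D.eObj (vmk_sound hkeyq).symm
  · -- reverse direction
    intro hT v₁ v₂
    set x₁ := Λ.bpathOf hlc (Λ.id v₁) with hxd₁
    set x₂ := Λ.bpathOf hlc (Λ.id v₂) with hxd₂
    have hx₁v : x₁.vtx 0 = v₁ := by
      rw [hxd₁, bpathOf_vtx_zero, Λ.rng_id]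
    have hx₂v : x₂.vtx 0 = v₂ := by
      rw [hxd₂, bpathOf_vtx_zero, Λ.rng_id]
    obtain ⟨wt, ⟨f₁, hf₁r, hf₁s⟩, ⟨f₂, hf₂r, hf₂s⟩⟩ :=
      hT (D.eObj (vmk Λ x₁ 0)) (D.eObj (vmk Λ x₂ 0))
    obtain ⟨⟨⟨z₁, p₁, q₁⟩, hle₁⟩, hrep₁⟩ := Quotient.exists_rep (D.eMor.symm f₁)
    obtain ⟨⟨⟨z₂, p₂, q₂⟩, hle₂⟩, hrep₂⟩ := Quotient.exists_rep (D.eMor.symm f₂)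
    have hf₁ : f₁ = D.eMor (pmk Λ z₁ p₁ q₁ hle₁) := by
      rw [show pmk Λ z₁ p₁ q₁ hle₁ = D.eMor.symm f₁ from hrep₁, Equiv.apply_symm_apply]
    have hf₂ : f₂ = D.eMor (pmk Λ z₂ p₂ q₂ hle₂) := by
      rw [show pmk Λ z₂ p₂ q₂ hle₂ = D.eMor.symm f₂ from hrep₂, Equiv.apply_symm_apply]
    have hr₁ : vmk Λ z₁ p₁ = vmk Λ x₁ 0 :=
      D.eObj.injective (((D.rng_eq z₁ p₁ q₁ hle₁).symm.trans (hf₁ ▸ hf₁r)))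
    have hr₂ : vmk Λ z₂ p₂ = vmk Λ x₂ 0 :=
      D.eObj.injective (((D.rng_eq z₂ p₂ q₂ hle₂).symm.trans (hf₂ ▸ hf₂r)))
    have hs : vmk Λ z₁ q₁ = vmk Λ z₂ q₂ := by
      apply D.eObj.injective
      rw [← D.src_eq z₁ p₁ q₁ hle₁, ← D.src_eq z₂ p₂ q₂ hle₂, ← hf₁, ← hf₂,
        hf₁s, hf₂s]
    have hv₁ : z₁.vtx p₁ = v₁ := by
      have := congrArg Prod.fst (vmk_exact hr₁)
      simpa [vkey, hx₁v] using this
    have hv₂ : z₂.vtx p₂ = v₂ := by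
      have := congrArg Prod.fst (vmk_exact hr₂)
      simpa [vkey, hx₂v] using this
    have hw : z₁.vtx q₁ = z₂.vtx q₂ := by
      have := congrArg Prod.fst (vmk_exact hs)
      simpa [vkey] using this
    refine ⟨z₁.vtx q₁, ⟨z₁.seg p₁ q₁ hle₁, ?_, ?_⟩, ⟨z₂.seg p₂ q₂ hle₂, ?_, ?_⟩⟩
    · rw [rng_seg, hv₁]
    · exact src_seg z₁ p₁ q₁ hle₁
    · rw [rng_seg, hv₂]
    · rw [src_seg, hw]
end
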